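/- arXiv:2102.05335 — 8 statements merged into one kernel-verified Lean document; each statement's English description precedes it below -/
import Mathlib

section
/- Let e>1 and l≥1 with l dividing e, and let s=(0,e/l,2e/l,…,(l−1)e/l). If λ=(λ^1,…,λ^l) is an l-partition of n and (i_1,…,i_n)∈(ℤ/eℤ)^n is a sequence with f̃_{i_1}^{(e,s)}⋯f̃_{i_n}^{(e,s)}∅=λ, then the cyclic shift μ:=(λ^l,λ^1,…,λ^{l−1}) satisfies f̃_{i_1+e/l}^{(e,s)}⋯f̃_{i_n+e/l}^{(e,s)}∅=μ (in particular every operator in this composition is defined, and μ∈Φ_{e,s}(n)). -/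
/-- An `l`-multipartition: for each component, a weakly decreasing, finitely
supported sequence of row lengths (rows indexed from `0`). -/
structure Multipartition (l : ℕ) where
  part : Fin l → ℕ → ℕ
  antitone' : ∀ c, Antitone (part c)
  support_finite' : ∀ c, ∃ N, ∀ a, N ≤ a → part c a = 0

/-- The empty multipartition. -/
def Multipartition.empty (l : ℕ) : Multipartition l :=
  ⟨fun _ _ => 0, fun _ => antitone_const, fun _ => ⟨0, fun _ _ => rfl⟩⟩

/-- The number of boxes (the rank) of a multipartition. -/
noncomputable def Multipartition.size {l : ℕ} (lam : Multipartition l) : ℕ :=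
  ∑ c : Fin l, ∑ᶠ a, lam.part c a

/-- A node `(a, b, c)`: row `a`, column `b` (both `0`-indexed), component `c`. -/
abbrev MPNode (l : ℕ) := ℕ × ℕ × Fin l

/-- The content `b - a + s_c` of a node (this agrees with the `1`-indexed
convention of the paper since the two shifts cancel). -/
def content {l : ℕ} (s : Fin l → ℤ) (γ : MPNode l) : ℤ :=
  (γ.2.1 : ℤ) - (γ.1 : ℤ) + s γ.2.2

/-- The residue of a node: its content modulo `e`. -/
def res (e : ℕ) {l : ℕ} (s : Fin l → ℤ) (γ : MPNode l) : ZMod e :=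
  (content s γ : ZMod e)

/-- `γ` is an addable node of `lam`. -/
def IsAddable {l : ℕ} (lam : Multipartition l) (γ : MPNode l) : Prop :=
  γ.2.1 = lam.part γ.2.2 γ.1 ∧
    (γ.1 = 0 ∨ lam.part γ.2.2 γ.1 < lam.part γ.2.2 (γ.1 - 1))

/-- `γ` is a removable node of `lam`. -/
def IsRemovable {l : ℕ} (lam : Multipartition l) (γ : MPNode l) : Prop :=
  γ.2.1 + 1 = lam.part γ.2.2 γ.1 ∧ lam.part γ.2.2 (γ.1 + 1) < lam.part γ.2.2 γ.1

/-- The order `≺_s` on nodes: compare contents, ties broken by *larger*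
component index being *smaller*. -/
def nlt {l : ℕ} (s : Fin l → ℤ) (γ δ : MPNode l) : Prop :=
  content s γ < content s δ ∨ (content s γ = content s δ ∧ δ.2.2 < γ.2.2)

/-- The reflexive closure `≼_s` of `≺_s`. -/
def nle {l : ℕ} (s : Fin l → ℤ) (γ δ : MPNode l) : Prop :=
  nlt s γ δ ∨ γ = δ

/-- `γ` is an addable or removable `i`-node of `lam`. -/
def IsARNode (e : ℕ) {l : ℕ} (s : Fin l → ℤ) (lam : Multipartition l)
    (i : ZMod e) (γ : MPNode l) : Prop :=
  (IsAddable lam γ ∨ IsRemovable lam γ) ∧ res e s γ = i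

/-- An addable `i`-node of `lam` whose letter `A` survives the recursive
deletion of the factors `RA` in the `i`-word of `lam`: for every
addable/removable `i`-node `δ ≼ γ`, the interval `[δ, γ]` contains strictly
more addable than removable `i`-nodes. -/
def SurvivingA (e : ℕ) {l : ℕ} (s : Fin l → ℤ) (lam : Multipartition l)
    (i : ZMod e) (γ : MPNode l) : Prop :=
  IsAddable lam γ ∧ res e s γ = i ∧
    ∀ δ, IsARNode e s lam i δ → nle s δ γ →
      {η | IsRemovable lam η ∧ res e s η = i ∧ nle s δ η ∧ nle s η γ}.ncard <
      {η | IsAddable lam η ∧ res e s η = i ∧ nle s δ η ∧ nle s η γ}.ncard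

/-- A removable `i`-node of `lam` whose letter `R` survives the recursive
deletion of the factors `RA` in the `i`-word of `lam`. -/
def SurvivingR (e : ℕ) {l : ℕ} (s : Fin l → ℤ) (lam : Multipartition l)
    (i : ZMod e) (γ : MPNode l) : Prop :=
  IsRemovable lam γ ∧ res e s γ = i ∧
    ∀ δ, IsARNode e s lam i δ → nle s γ δ →
      {η | IsAddable lam η ∧ res e s η = i ∧ nle s γ η ∧ nle s η δ}.ncard <
      {η | IsRemovable lam η ∧ res e s η = i ∧ nle s γ η ∧ nle s η δ}.ncard

/-- `γ` is the good addable `i`-node of `lam`: the rightmost `A` of the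
reduced `i`-word, i.e. the `≺_s`-largest surviving addable `i`-node. -/
def GoodAddable (e : ℕ) {l : ℕ} (s : Fin l → ℤ) (lam : Multipartition l)
    (i : ZMod e) (γ : MPNode l) : Prop :=
  SurvivingA e s lam i γ ∧ ∀ δ, SurvivingA e s lam i δ → nle s δ γ

/-- `γ` is the good removable `i`-node of `lam`: the leftmost `R` of the
reduced `i`-word, i.e. the `≺_s`-smallest surviving removable `i`-node. -/
def GoodRemovable (e : ℕ) {l : ℕ} (s : Fin l → ℤ) (lam : Multipartition l)
    (i : ZMod e) (γ : MPNode l) : Prop :=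
  SurvivingR e s lam i γ ∧ ∀ δ, SurvivingR e s lam i δ → nle s γ δ

/-- `mu` is obtained from `lam` by adding the node `γ`. -/
def AddAt {l : ℕ} (lam : Multipartition l) (γ : MPNode l)
    (mu : Multipartition l) : Prop :=
  ∀ (c : Fin l) (a : ℕ),
    mu.part c a = if c = γ.2.2 ∧ a = γ.1 then lam.part c a + 1 else lam.part c a

/-- The Kashiwara operator `f̃_i^{(e,s)}` as a relation: `mu = f̃_i lam`. -/
def FRel (e : ℕ) {l : ℕ} (s : Fin l → ℤ) (i : ZMod e)
    (lam mu : Multipartition l) : Prop :=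
  ∃ γ, GoodAddable e s lam i γ ∧ AddAt lam γ mu

/-- `FSeq e s [i₁, …, iₙ] lam mu` means `mu = f̃_{i₁} ⋯ f̃_{iₙ} lam`
(the last index of the list is applied first). -/
def FSeq (e : ℕ) {l : ℕ} (s : Fin l → ℤ) :
    List (ZMod e) → Multipartition l → Multipartition l → Prop
  | [], lam, mu => mu = lam
  | i :: is, lam, mu => ∃ nu, FSeq e s is lam nu ∧ FRel e s i nu mu

/-- The set `Φ_{e,s}(n)` of Uglov `l`-partitions of rank `n`. -/
def UglovSet (e : ℕ) {l : ℕ} (s : Fin l → ℤ) (n : ℕ) : Set (Multipartition l) :=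
  {lam | ∃ is : List (ZMod e), is.length = n ∧
    FSeq e s is (Multipartition.empty l) lam}

/-- Two multicharges lie in the same orbit of the extended affine symmetric
group iff one is obtained from the other by permuting the coordinates and
adding integer multiples of `e` to individual coordinates. -/
def SameOrbit (e : ℕ) {l : ℕ} (s s' : Fin l → ℤ) : Prop :=
  ∃ (σ : Equiv.Perm (Fin l)) (t : Fin l → ℤ), ∀ c, s' c = s (σ c) + e * t c

/-- Cyclic shift of a node: `(a, b, c) ↦ (a, b, c+1)`, third coordinate mod `l`. -/
def cshift {l : ℕ} (hl : 0 < l) (γ : MPNode l) : MPNode l :=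
  (γ.1, γ.2.1, ⟨(γ.2.2.val + 1) % l, Nat.mod_lt _ hl⟩)

/-- The component `c + j·k` (mod `l`) of `Fin l`, for `c : Fin k`. -/
def klift {k l : ℕ} (hl : 0 < l) (c : Fin k) (j : ℕ) : Fin l :=
  ⟨(c.val + j * k) % l, Nat.mod_lt _ hl⟩

/-- The FLOTW conditions for the multicharge `s` and modulus `e`
(rows `0`-indexed; paper row `i` is row `a = i - 1` here). -/
def FLOTW (e : ℕ) {l : ℕ} (s : Fin l → ℤ) (lam : Multipartition l) : Prop :=
  (∀ (j : Fin l) (hj : j.val + 1 < l) (a : ℕ),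
      lam.part ⟨j.val + 1, hj⟩ (a + (s ⟨j.val + 1, hj⟩ - s j).toNat) ≤
        lam.part j a) ∧
  (∀ (hl : 0 < l) (a : ℕ),
      lam.part ⟨0, hl⟩ (a + ((e : ℤ) + s ⟨0, hl⟩ - s ⟨l - 1, by omega⟩).toNat) ≤
        lam.part ⟨l - 1, by omega⟩ a) ∧
  (∀ m : ℕ, 0 < m →
      {r : ZMod e | ∃ (j : Fin l) (a : ℕ), lam.part j a = m ∧
          r = (((m : ℤ) - ((a : ℤ) + 1) + s j : ℤ) : ZMod e)} ≠ Set.univ)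

/-- A partition (given by its sequence of parts) is `d`-regular:
no nonzero part is repeated `d` or more times. -/
def RegularPartition (d : ℕ) (p : ℕ → ℕ) : Prop :=
  ∀ a, 0 < p a → p (a + (d - 1)) < p a

namespace HuAux

variable {l : ℕ}

theorem mp_ext {lam mu : Multipartition l}
    (h : ∀ c a, lam.part c a = mu.part c a) : lam = mu := by
  cases lam; cases mu
  simp only [Multipartition.mk.injEq]
  funext c a; exact h c a

/-- Next component mod `l`. -/
def nextc (hl : 0 < l) (c : Fin l) : Fin l := ⟨(c.val + 1) % l, Nat.mod_lt _ hl⟩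

/-- Previous component mod `l`. -/
def prevc (hl : 0 < l) (c : Fin l) : Fin l :=
  ⟨(c.val + (l - 1)) % l, Nat.mod_lt _ hl⟩

theorem prevc_nextc (hl : 0 < l) (c : Fin l) : prevc hl (nextc hl c) = c := by
  have hc := c.isLt
  apply Fin.ext
  show ((c.val + 1) % l + (l - 1)) % l = c.val
  rw [Nat.mod_add_mod]
  have h1 : c.val + 1 + (l - 1) = c.val + l := by omega
  rw [h1, Nat.add_mod_right, Nat.mod_eq_of_lt hc]

theorem nextc_prevc (hl : 0 < l) (c : Fin l) : nextc hl (prevc hl c) = c := by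
  have hc := c.isLt
  apply Fin.ext
  show ((c.val + (l - 1)) % l + 1) % l = c.val
  rw [Nat.mod_add_mod]
  have h1 : c.val + (l - 1) + 1 = c.val + l := by omega
  rw [h1, Nat.add_mod_right, Nat.mod_eq_of_lt hc]

/-- Inverse of the cyclic shift of nodes. -/
def cshiftInv (hl : 0 < l) (γ : MPNode l) : MPNode l :=
  (γ.1, γ.2.1, prevc hl γ.2.2)

theorem cshift_eq (hl : 0 < l) (γ : MPNode l) :
    cshift hl γ = (γ.1, γ.2.1, nextc hl γ.2.2) := rfl

theorem cshiftInv_cshift (hl : 0 < l) (γ : MPNode l) :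
    cshiftInv hl (cshift hl γ) = γ := by
  cases γ with
  | mk a bc =>
    cases bc with
    | mk b c =>
      simp only [cshiftInv, cshift_eq, prevc_nextc]

theorem cshift_cshiftInv (hl : 0 < l) (γ : MPNode l) :
    cshift hl (cshiftInv hl γ) = γ := by
  cases γ with
  | mk a bc =>
    cases bc with
    | mk b c =>
      simp only [cshiftInv, cshift_eq, nextc_prevc]

theorem cshift_injective (hl : 0 < l) : Function.Injective (cshift hl) :=
  Function.LeftInverse.injective (cshiftInv_cshift hl)

/-- The cyclic shift of a multipartition: component `c` of the shift is
component `c - 1` (mod `l`) of the original. -/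
def shiftMP (hl : 0 < l) (lam : Multipartition l) : Multipartition l :=
  ⟨fun c a => lam.part (prevc hl c) a, fun c => lam.antitone' _,
    fun c => lam.support_finite' _⟩

theorem shiftMP_part_nextc (hl : 0 < l) (lam : Multipartition l) (c : Fin l)
    (a : ℕ) : (shiftMP hl lam).part (nextc hl c) a = lam.part c a := by
  show lam.part (prevc hl (nextc hl c)) a = lam.part c a
  rw [prevc_nextc]

theorem isAddable_cshift (hl : 0 < l) (lam : Multipartition l) (γ : MPNode l) :
    IsAddable (shiftMP hl lam) (cshift hl γ) ↔ IsAddable lam γ := by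
  unfold IsAddable
  rw [cshift_eq]
  simp only [shiftMP_part_nextc]

theorem isRemovable_cshift (hl : 0 < l) (lam : Multipartition l)
    (γ : MPNode l) :
    IsRemovable (shiftMP hl lam) (cshift hl γ) ↔ IsRemovable lam γ := by
  unfold IsRemovable
  rw [cshift_eq]
  simp only [shiftMP_part_nextc]

section Charge

variable {e : ℕ} {s : Fin l → ℤ}

theorem s_nextc (hl : 0 < l) (hdvd : l ∣ e)
    (hs : ∀ c : Fin l, s c = ((c.val * (e / l) : ℕ) : ℤ)) (c : Fin l) :
    s (nextc hl c) = s c + ((e / l : ℕ) : ℤ) -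
      (if c.val = l - 1 then (e : ℤ) else 0) := by
  have hle : l * (e / l) = e := Nat.mul_div_cancel' hdvd
  have hc := c.isLt
  by_cases hcase : c.val = l - 1
  · have hnext : (nextc hl c).val = 0 := by
      show (c.val + 1) % l = 0
      rw [hcase]
      have h2 : l - 1 + 1 = l := by omega
      rw [h2, Nat.mod_self]
    rw [if_pos hcase, hs, hs, hnext, hcase]
    have key : (l - 1) * (e / l) + e / l = e := by
      have h2 : l - 1 + 1 = l := by omega
      calc (l - 1) * (e / l) + e / l = (l - 1 + 1) * (e / l) := by ring
        _ = e := by rw [h2, hle]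
    have keyZ : (((l - 1) * (e / l) : ℕ) : ℤ) + ((e / l : ℕ) : ℤ) = (e : ℤ) := by
      exact_mod_cast key
    simp only [Nat.zero_mul, Nat.cast_zero]
    linarith [keyZ]
  · have hnext : (nextc hl c).val = c.val + 1 := by
      show (c.val + 1) % l = c.val + 1
      exact Nat.mod_eq_of_lt (by omega)
    rw [if_neg hcase, hs, hs, hnext]
    have key : (c.val + 1) * (e / l) = c.val * (e / l) + e / l := by ring
    have keyZ : (((c.val + 1) * (e / l) : ℕ) : ℤ) =
        ((c.val * (e / l) : ℕ) : ℤ) + ((e / l : ℕ) : ℤ) := by exact_mod_cast key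
    linarith [keyZ]

theorem content_cshift (hl : 0 < l) (hdvd : l ∣ e)
    (hs : ∀ c : Fin l, s c = ((c.val * (e / l) : ℕ) : ℤ)) (γ : MPNode l) :
    content s (cshift hl γ) = content s γ + ((e / l : ℕ) : ℤ) -
      (if γ.2.2.val = l - 1 then (e : ℤ) else 0) := by
  show ((cshift hl γ).2.1 : ℤ) - ((cshift hl γ).1 : ℤ) + s (cshift hl γ).2.2 = _
  rw [cshift_eq]
  show (γ.2.1 : ℤ) - (γ.1 : ℤ) + s (nextc hl γ.2.2) = _
  rw [s_nextc hl hdvd hs]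
  unfold content
  ring

theorem res_cshift (hl : 0 < l) (hdvd : l ∣ e)
    (hs : ∀ c : Fin l, s c = ((c.val * (e / l) : ℕ) : ℤ)) (γ : MPNode l) :
    res e s (cshift hl γ) = res e s γ + ((e / l : ℕ) : ZMod e) := by
  unfold res
  rw [content_cshift hl hdvd hs]
  split_ifs with h
  · rw [Int.cast_sub, Int.cast_add, Int.cast_natCast, Int.cast_natCast,
      ZMod.natCast_self, sub_zero]
  · rw [sub_zero, Int.cast_add, Int.cast_natCast]

theorem res_eq_dvd (he : 1 < e) {γ δ : MPNode l}
    (h : res e s γ = res e s δ) : (e : ℤ) ∣ content s γ - content s δ := by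
  haveI : NeZero e := ⟨by omega⟩
  rw [← ZMod.intCast_zmod_eq_zero_iff_dvd]
  push_cast
  unfold res at h
  rw [h]
  ring

theorem dvd_lt_iff {x y : ℤ} (he : 0 < (e : ℤ)) (h : (e : ℤ) ∣ x - y) :
    x - e < y ↔ x ≤ y := by
  constructor
  · intro h1
    by_contra h2
    push_neg at h2
    have h3 : (e : ℤ) ≤ x - y := Int.le_of_dvd (by omega) h
    omega
  · intro h1; omega

theorem dvd_le_iff {x y : ℤ} (he : 0 < (e : ℤ)) (h : (e : ℤ) ∣ x - y) :
    x ≤ y - e ↔ x < y := by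
  constructor
  · intro h1; omega
  · intro h1
    have h4 : (e : ℤ) ∣ y - x := by
      have h5 := dvd_neg.mpr h
      rwa [neg_sub] at h5
    have h3 : (e : ℤ) ≤ y - x := Int.le_of_dvd (by omega) h4
    omega

theorem nlt_cshift (he : 1 < e) (hl : 0 < l) (hdvd : l ∣ e)
    (hs : ∀ c : Fin l, s c = ((c.val * (e / l) : ℕ) : ℤ)) {γ δ : MPNode l}
    (hres : res e s γ = res e s δ) :
    nlt s (cshift hl γ) (cshift hl δ) ↔ nlt s γ δ := by
  have hdc : (e : ℤ) ∣ content s γ - content s δ := res_eq_dvd he hres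
  have hcγ := content_cshift hl hdvd hs (s := s) γ
  have hcδ := content_cshift hl hdvd hs (s := s) δ
  have hγlt := γ.2.2.isLt
  have hδlt := δ.2.2.isLt
  have hγc : (cshift hl γ).2.2.val = (γ.2.2.val + 1) % l := rfl
  have hδc : (cshift hl δ).2.2.val = (δ.2.2.val + 1) % l := rfl
  have hepos : (0 : ℤ) < (e : ℤ) := by exact_mod_cast (by omega : 0 < e)
  unfold nlt
  rw [Fin.lt_def, Fin.lt_def, hγc, hδc, hcγ, hcδ]
  by_cases h1 : γ.2.2.val = l - 1 <;> by_cases h2 : δ.2.2.val = l - 1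
  · -- both wrap
    rw [if_pos h1, if_pos h2]
    have : γ.2.2.val = δ.2.2.val := by omega
    rw [this]
    constructor
    · rintro (h | ⟨h, h'⟩)
      · left; omega
      · exact absurd h' (lt_irrefl _)
    · rintro (h | ⟨h, h'⟩)
      · left; omega
      · exact absurd h' (lt_irrefl _)
  · -- γ wraps, δ does not
    rw [if_pos h1, if_neg h2]
    have hγ0 : (γ.2.2.val + 1) % l = 0 := by
      rw [h1]
      have h3 : l - 1 + 1 = l := by omega
      rw [h3, Nat.mod_self]
    have hδ0 : (δ.2.2.val + 1) % l = δ.2.2.val + 1 :=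
      Nat.mod_eq_of_lt (by omega)
    rw [hγ0, hδ0]
    have key : content s γ - (e : ℤ) < content s δ ↔
        content s γ ≤ content s δ := dvd_lt_iff hepos hdc
    constructor
    · rintro (h | ⟨h, h'⟩)
      · have hle : content s γ ≤ content s δ := key.mp (by omega)
        rcases lt_or_eq_of_le hle with h3 | h3
        · left; exact h3
        · right; exact ⟨h3, by omega⟩
      · omega
    · rintro (h | ⟨h, h'⟩)
      · left
        have : content s γ ≤ content s δ := le_of_lt h
        have := key.mpr this
        omega
      · left
        have : content s γ ≤ content s δ := le_of_eq h
        have := key.mpr this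
        omega
  · -- δ wraps, γ does not
    rw [if_neg h1, if_pos h2]
    have hδ0 : (δ.2.2.val + 1) % l = 0 := by
      rw [h2]
      have h3 : l - 1 + 1 = l := by omega
      rw [h3, Nat.mod_self]
    have hγ0 : (γ.2.2.val + 1) % l = γ.2.2.val + 1 :=
      Nat.mod_eq_of_lt (by omega)
    rw [hγ0, hδ0]
    have key : content s γ ≤ content s δ - (e : ℤ) ↔
        content s γ < content s δ := dvd_le_iff hepos hdc
    constructor
    · rintro (h | ⟨h, h'⟩)
      · left; exact key.mp (by omega)
      · left; exact key.mp (by omega)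
    · rintro (h | ⟨h, h'⟩)
      · have hle : content s γ ≤ content s δ - (e : ℤ) := key.mpr h
        rcases lt_or_eq_of_le hle with h3 | h3
        · left; omega
        · right; exact ⟨by omega, by omega⟩
      · omega
  · -- neither wraps
    rw [if_neg h1, if_neg h2]
    have hγ0 : (γ.2.2.val + 1) % l = γ.2.2.val + 1 :=
      Nat.mod_eq_of_lt (by omega)
    have hδ0 : (δ.2.2.val + 1) % l = δ.2.2.val + 1 :=
      Nat.mod_eq_of_lt (by omega)
    rw [hγ0, hδ0]
    constructor
    · rintro (h | ⟨h, h'⟩)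
      · left; omega
      · right; exact ⟨by omega, by omega⟩
    · rintro (h | ⟨h, h'⟩)
      · left; omega
      · right; exact ⟨by omega, by omega⟩

theorem nle_cshift (he : 1 < e) (hl : 0 < l) (hdvd : l ∣ e)
    (hs : ∀ c : Fin l, s c = ((c.val * (e / l) : ℕ) : ℤ)) {γ δ : MPNode l}
    (hres : res e s γ = res e s δ) :
    nle s (cshift hl γ) (cshift hl δ) ↔ nle s γ δ := by
  unfold nle
  rw [nlt_cshift he hl hdvd hs hres]
  constructor
  · rintro (h | h)
    · left; exact h
    · right; exact cshift_injective hl h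
  · rintro (h | h)
    · left; exact h
    · right; rw [h]

theorem shiftMP_part (hl : 0 < l) (lam : Multipartition l) (c : Fin l)
    (a : ℕ) : (shiftMP hl lam).part c a = lam.part (prevc hl c) a := rfl

theorem set_shift (he : 1 < e) (hl : 0 < l) (hdvd : l ∣ e)
    (hs : ∀ c : Fin l, s c = ((c.val * (e / l) : ℕ) : ℤ))
    (i : ZMod e) {δ γ : MPNode l} (hδ : res e s δ = i) (hγ : res e s γ = i)
    (P Q : MPNode l → Prop) (hP : ∀ η, Q (cshift hl η) ↔ P η) :
    {η | Q η ∧ res e s η = i + ((e / l : ℕ) : ZMod e) ∧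
        nle s (cshift hl δ) η ∧ nle s η (cshift hl γ)} =
      cshift hl '' {η | P η ∧ res e s η = i ∧ nle s δ η ∧ nle s η γ} := by
  ext η'
  constructor
  · rintro ⟨hQ, hr, h1, h2⟩
    refine ⟨cshiftInv hl η', ?_, cshift_cshiftInv hl η'⟩
    have hE : η' = cshift hl (cshiftInv hl η') := (cshift_cshiftInv hl η').symm
    rw [hE] at hQ hr h1 h2
    have hres : res e s (cshiftInv hl η') = i := by
      rw [res_cshift hl hdvd hs] at hr
      exact add_right_cancel hr
    refine ⟨(hP _).mp hQ, hres, ?_, ?_⟩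
    · exact (nle_cshift he hl hdvd hs (by rw [hδ, hres])).mp h1
    · exact (nle_cshift he hl hdvd hs (by rw [hγ, hres])).mp h2
  · rintro ⟨η, ⟨hQ, hr, h1, h2⟩, rfl⟩
    refine ⟨(hP _).mpr hQ, ?_, ?_, ?_⟩
    · rw [res_cshift hl hdvd hs, hr]
    · exact (nle_cshift he hl hdvd hs (by rw [hδ, hr])).mpr h1
    · exact (nle_cshift he hl hdvd hs (by rw [hγ, hr])).mpr h2

theorem isARNode_cshift (he : 1 < e) (hl : 0 < l) (hdvd : l ∣ e)
    (hs : ∀ c : Fin l, s c = ((c.val * (e / l) : ℕ) : ℤ))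
    (lam : Multipartition l) (i : ZMod e) (γ : MPNode l) :
    IsARNode e s (shiftMP hl lam) (i + ((e / l : ℕ) : ZMod e)) (cshift hl γ) ↔
      IsARNode e s lam i γ := by
  unfold IsARNode
  rw [isAddable_cshift, isRemovable_cshift, res_cshift hl hdvd hs]
  exact and_congr Iff.rfl ⟨fun h => add_right_cancel h, fun h => by rw [h]⟩

theorem survivingA_cshift (he : 1 < e) (hl : 0 < l) (hdvd : l ∣ e)
    (hs : ∀ c : Fin l, s c = ((c.val * (e / l) : ℕ) : ℤ))
    (lam : Multipartition l) (i : ZMod e) (γ : MPNode l) :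
    SurvivingA e s (shiftMP hl lam) (i + ((e / l : ℕ) : ZMod e))
      (cshift hl γ) ↔ SurvivingA e s lam i γ := by
  unfold SurvivingA
  constructor
  · rintro ⟨ha, hr, hmain⟩
    have hγres : res e s γ = i := by
      rw [res_cshift hl hdvd hs] at hr
      exact add_right_cancel hr
    refine ⟨(isAddable_cshift hl lam γ).mp ha, hγres, ?_⟩
    intro δ hδAR hδle
    have hδres : res e s δ = i := hδAR.2
    have hkey := hmain (cshift hl δ)
      ((isARNode_cshift he hl hdvd hs lam i δ).mpr hδAR)
      ((nle_cshift he hl hdvd hs (by rw [hδres, hγres])).mpr hδle)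
    rwa [set_shift he hl hdvd hs i hδres hγres
        (fun η => IsRemovable lam η) _ (fun η => isRemovable_cshift hl lam η),
      set_shift he hl hdvd hs i hδres hγres
        (fun η => IsAddable lam η) _ (fun η => isAddable_cshift hl lam η),
      Set.ncard_image_of_injective _ (cshift_injective hl),
      Set.ncard_image_of_injective _ (cshift_injective hl)] at hkey
  · rintro ⟨ha, hγres, hmain⟩
    refine ⟨(isAddable_cshift hl lam γ).mpr ha,
      by rw [res_cshift hl hdvd hs, hγres], ?_⟩
    intro δ' hAR' hle'
    have hE : δ' = cshift hl (cshiftInv hl δ') := (cshift_cshiftInv hl δ').symm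
    rw [hE] at hAR' hle' ⊢
    set δ := cshiftInv hl δ' with hδdef
    have hAR := (isARNode_cshift he hl hdvd hs lam i δ).mp hAR'
    have hδres : res e s δ = i := hAR.2
    have hle := (nle_cshift he hl hdvd hs (by rw [hδres, hγres])).mp hle'
    have hkey := hmain δ hAR hle
    rw [set_shift he hl hdvd hs i hδres hγres
        (fun η => IsRemovable lam η) _ (fun η => isRemovable_cshift hl lam η),
      set_shift he hl hdvd hs i hδres hγres
        (fun η => IsAddable lam η) _ (fun η => isAddable_cshift hl lam η),
      Set.ncard_image_of_injective _ (cshift_injective hl),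
      Set.ncard_image_of_injective _ (cshift_injective hl)]
    exact hkey

theorem goodAddable_cshift (he : 1 < e) (hl : 0 < l) (hdvd : l ∣ e)
    (hs : ∀ c : Fin l, s c = ((c.val * (e / l) : ℕ) : ℤ))
    {lam : Multipartition l} {i : ZMod e} {γ : MPNode l}
    (h : GoodAddable e s lam i γ) :
    GoodAddable e s (shiftMP hl lam) (i + ((e / l : ℕ) : ZMod e))
      (cshift hl γ) := by
  obtain ⟨hsurv, hmax⟩ := h
  have hγres : res e s γ = i := hsurv.2.1
  refine ⟨(survivingA_cshift he hl hdvd hs lam i γ).mpr hsurv, ?_⟩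
  intro δ' hδ'
  have hE : δ' = cshift hl (cshiftInv hl δ') := (cshift_cshiftInv hl δ').symm
  rw [hE] at hδ' ⊢
  have hδsurv := (survivingA_cshift he hl hdvd hs lam i _).mp hδ'
  have hδres : res e s (cshiftInv hl δ') = i := hδsurv.2.1
  exact (nle_cshift he hl hdvd hs (by rw [hδres, hγres])).mpr
    (hmax _ hδsurv)

theorem frel_cshift (he : 1 < e) (hl : 0 < l) (hdvd : l ∣ e)
    (hs : ∀ c : Fin l, s c = ((c.val * (e / l) : ℕ) : ℤ))
    {lam mu : Multipartition l} {i : ZMod e}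
    (h : FRel e s i lam mu) :
    FRel e s (i + ((e / l : ℕ) : ZMod e)) (shiftMP hl lam) (shiftMP hl mu) := by
  obtain ⟨γ, hgood, haddat⟩ := h
  refine ⟨cshift hl γ, goodAddable_cshift he hl hdvd hs hgood, ?_⟩
  intro c a
  have hiff : (prevc hl c = γ.2.2) ↔ (c = (cshift hl γ).2.2) := by
    rw [cshift_eq]
    exact ⟨fun h => by rw [← h, nextc_prevc], fun h => by
      rw [h]; exact prevc_nextc hl γ.2.2⟩
  have hcfst : (cshift hl γ).1 = γ.1 := rfl
  rw [shiftMP_part, shiftMP_part, haddat (prevc hl c) a, hcfst]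
  exact if_congr (and_congr hiff Iff.rfl) rfl rfl

theorem shiftMP_empty (hl : 0 < l) :
    shiftMP hl (Multipartition.empty l) = Multipartition.empty l :=
  mp_ext fun _ _ => rfl

theorem fseq_cshift (he : 1 < e) (hl : 0 < l) (hdvd : l ∣ e)
    (hs : ∀ c : Fin l, s c = ((c.val * (e / l) : ℕ) : ℤ))
    (is : List (ZMod e)) :
    ∀ {lam0 lam : Multipartition l}, FSeq e s is lam0 lam →
      FSeq e s (is.map (fun i => i + ((e / l : ℕ) : ZMod e)))
        (shiftMP hl lam0) (shiftMP hl lam) := by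
  induction is with
  | nil =>
    intro lam0 lam h
    show shiftMP hl lam = shiftMP hl lam0
    rw [show lam = lam0 from h]
  | cons i is ih =>
    rintro lam0 lam ⟨nu, hseq, hrel⟩
    exact ⟨shiftMP hl nu, ih hseq, frel_cshift he hl hdvd hs hrel⟩

end Charge

end HuAux

/-- Hu's lemma (Lemma 3.2 of the paper): for the multicharge
`s = (0, e/l, …, (l-1)e/l)`, if a sequence of Kashiwara operators produces
`λ = (λ¹, …, λˡ)` from the empty multipartition, then the sequence with all
indices shifted by `e/l` produces the cyclic shift `μ = (λˡ, λ¹, …, λ^{l-1})`;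
in particular `μ` is again an Uglov `l`-partition of `n`. -/
theorem stmt0 (e l n : ℕ) (he : 1 < e) (hl : 0 < l) (hdvd : l ∣ e)
    (s : Fin l → ℤ) (hs : ∀ c : Fin l, s c = ((c.val * (e / l) : ℕ) : ℤ))
    (lam : Multipartition l) (hsize : lam.size = n)
    (is : List (ZMod e)) (hlen : is.length = n)
    (hseq : FSeq e s is (Multipartition.empty l) lam)
    (mu : Multipartition l)
    (hmu : ∀ (c : Fin l) (a : ℕ),
      mu.part c a = lam.part ⟨(c.val + (l - 1)) % l, Nat.mod_lt _ hl⟩ a) :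
    FSeq e s (is.map (fun i => i + ((e / l : ℕ) : ZMod e)))
      (Multipartition.empty l) mu ∧ mu ∈ UglovSet e s n := by
  have hmu' : mu = HuAux.shiftMP hl lam := by
    apply HuAux.mp_ext
    intro c a
    rw [hmu]
    rfl
  have h1 := HuAux.fseq_cshift he hl hdvd hs is hseq
  rw [HuAux.shiftMP_empty hl] at h1
  rw [← hmu'] at h1
  refine ⟨h1, ?_⟩
  exact ⟨is.map (fun i => i + ((e / l : ℕ) : ZMod e)),
    by rw [List.length_map, hlen], h1⟩
end

section
/- Let e>1 and l≥1 with l dividing e, and let s=(0,e/l,2e/l,…,(l−1)e/l). Then for every n the set Φ_{e,s}(n) of Uglov l-partitions of n is stable under the cyclic shift (λ^1,…,λ^l) ↦ (λ^l,λ^1,…,λ^{l−1}). -/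
namespace StmtAux

variable {l : ℕ}

theorem mp_ext {x y : Multipartition l} (h : ∀ c a, x.part c a = y.part c a) :
    x = y := by
  cases x; cases y
  simp only [Multipartition.mk.injEq]
  funext c a; exact h c a

lemma idx1 (hl : 0 < l) (c : ℕ) (hc : c < l) : ((c + 1) % l + (l - 1)) % l = c := by
  rcases Nat.lt_or_ge (c + 1) l with h | h
  · rw [Nat.mod_eq_of_lt h]
    have h2 : c + 1 + (l - 1) = c + l := by omega
    rw [h2, Nat.add_mod_right, Nat.mod_eq_of_lt hc]
  · have hcl : c + 1 = l := by omega
    rw [hcl, Nat.mod_self, Nat.zero_add, Nat.mod_eq_of_lt (show l - 1 < l by omega)]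
    omega

lemma idx2 (hl : 0 < l) (c : ℕ) (hc : c < l) : ((c + (l - 1)) % l + 1) % l = c := by
  rcases Nat.eq_zero_or_pos c with h | h
  · subst h
    rw [Nat.zero_add, Nat.mod_eq_of_lt (show l - 1 < l by omega),
      show l - 1 + 1 = l by omega, Nat.mod_self]
  · rw [show c + (l - 1) = (c - 1) + l by omega, Nat.add_mod_right,
      Nat.mod_eq_of_lt (show c - 1 < l by omega), show c - 1 + 1 = c by omega,
      Nat.mod_eq_of_lt hc]

/-- The shifted multipartition `(λ^{l-1}, λ^0, …, λ^{l-2})`. -/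
def shiftMP (hl : 0 < l) (lam : Multipartition l) : Multipartition l :=
  ⟨fun c a => lam.part ⟨(c.val + (l - 1)) % l, Nat.mod_lt _ hl⟩ a,
   fun c => lam.antitone' _, fun c => lam.support_finite' _⟩

/-- Inverse of `cshift`. -/
def cunshift (hl : 0 < l) (γ : MPNode l) : MPNode l :=
  (γ.1, γ.2.1, ⟨(γ.2.2.val + (l - 1)) % l, Nat.mod_lt _ hl⟩)

lemma cshift_cunshift (hl : 0 < l) (γ : MPNode l) :
    cshift hl (cunshift hl γ) = γ := by
  obtain ⟨a, b, cv, hcv⟩ := γ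
  simp only [cshift, cunshift, Prod.mk.injEq, Fin.val_mk, Fin.mk.injEq,
    true_and]
  exact idx2 hl cv hcv

lemma cunshift_cshift (hl : 0 < l) (γ : MPNode l) :
    cunshift hl (cshift hl γ) = γ := by
  obtain ⟨a, b, cv, hcv⟩ := γ
  simp only [cshift, cunshift, Prod.mk.injEq, Fin.val_mk, Fin.mk.injEq,
    true_and]
  exact idx1 hl cv hcv

lemma cshift_injective (hl : 0 < l) : Function.Injective (cshift (l := l) hl) :=
  Function.LeftInverse.injective (cunshift_cshift hl)

lemma shiftMP_part_inc (hl : 0 < l) (lam : Multipartition l) (c : Fin l) :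
    (shiftMP hl lam).part ⟨(c.val + 1) % l, Nat.mod_lt _ hl⟩ = lam.part c := by
  show lam.part ⟨((c.val + 1) % l + (l - 1)) % l, _⟩ = lam.part c
  exact congrArg lam.part (Fin.ext (idx1 hl c.val c.isLt))

section

variable (e : ℕ) (s : Fin l → ℤ)

lemma content_cshift (hl : 0 < l) (hdvd : l ∣ e)
    (hs : ∀ c : Fin l, s c = ((c.val * (e / l) : ℕ) : ℤ)) (γ : MPNode l) :
    content s (cshift hl γ) =
      content s γ + ((e / l : ℕ) : ℤ) - (if γ.2.2.val + 1 = l then (e : ℤ) else 0) := by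
  obtain ⟨a, b, c⟩ := γ
  by_cases h : c.val + 1 = l
  · have hf : (⟨(c.val + 1) % l, Nat.mod_lt _ hl⟩ : Fin l) = ⟨0, hl⟩ :=
      Fin.ext (by rw [Fin.val_mk, h, Nat.mod_self])
    simp only [cshift, content, hf, if_pos h]
    rw [hs, hs]
    have key : c.val * (e / l) + e / l = e := by
      have h1 : c.val * (e / l) + e / l = (c.val + 1) * (e / l) := by ring
      rw [h1, h, Nat.mul_div_cancel' hdvd]
    have keyz : ((c.val * (e / l) : ℕ) : ℤ) + ((e / l : ℕ) : ℤ) = (e : ℤ) := by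
      exact_mod_cast congrArg (Nat.cast : ℕ → ℤ) key
    simp only [Fin.val_mk, Nat.zero_mul, Nat.cast_zero]
    linarith
  · have hf : (⟨(c.val + 1) % l, Nat.mod_lt _ hl⟩ : Fin l) = ⟨c.val + 1, by omega⟩ :=
      Fin.ext (by rw [Fin.val_mk, Nat.mod_eq_of_lt (by omega)])
    simp only [cshift, content, hf, if_neg h]
    rw [hs, hs]
    simp only [Fin.val_mk]
    push_cast
    ring

lemma res_cshift (hl : 0 < l) (hdvd : l ∣ e)
    (hs : ∀ c : Fin l, s c = ((c.val * (e / l) : ℕ) : ℤ)) (γ : MPNode l) :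
    res e s (cshift hl γ) = res e s γ + ((e / l : ℕ) : ZMod e) := by
  simp only [res, content_cshift e s hl hdvd hs γ]
  by_cases h : γ.2.2.val + 1 = l
  · rw [if_pos h, Int.cast_sub, Int.cast_add, Int.cast_natCast, Int.cast_natCast,
      ZMod.natCast_self, sub_zero]
  · rw [if_neg h, sub_zero, Int.cast_add, Int.cast_natCast]

lemma res_eq_dvd {x y : ℤ} (h : ((x : ZMod e)) = ((y : ZMod e))) :
    (e : ℤ) ∣ (y - x) := by
  have h2 : ((y - x : ℤ) : ZMod e) = 0 := by
    rw [Int.cast_sub, h, sub_self]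
  exact (ZMod.intCast_zmod_eq_zero_iff_dvd _ _).mp h2

lemma dvd_cases (he : 0 < e) {x y : ℤ} (h : (e : ℤ) ∣ (y - x)) :
    x = y ∨ x + e ≤ y ∨ y + e ≤ x := by
  obtain ⟨k, hk⟩ := h
  rcases lt_trichotomy k 0 with h1 | h1 | h1
  · right; right
    have h2 : (e : ℤ) * k ≤ (e : ℤ) * (-1) :=
      mul_le_mul_of_nonneg_left (by omega) (by positivity)
    have h3 : (e : ℤ) * (-1) = -e := by ring
    omega
  · left; rw [h1, mul_zero] at hk; omega
  · right; left
    have h2 : (e : ℤ) * 1 ≤ (e : ℤ) * k :=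
      mul_le_mul_of_nonneg_left (by omega) (by positivity)
    have h3 : (e : ℤ) * 1 = e := by ring
    omega

end

end StmtAux
namespace StmtAux

section

variable {l : ℕ} (e : ℕ) (s : Fin l → ℤ)

lemma nlt_cshift (hl : 0 < l) (he : 0 < e) (hdvd : l ∣ e)
    (hs : ∀ c : Fin l, s c = ((c.val * (e / l) : ℕ) : ℤ)) {γ δ : MPNode l}
    (hr : res e s γ = res e s δ) :
    nlt s (cshift hl γ) (cshift hl δ) ↔ nlt s γ δ := by
  have hr' : ((content s γ : ℤ) : ZMod e) = ((content s δ : ℤ) : ZMod e) := hr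
  have tri := dvd_cases e he (res_eq_dvd e hr')
  have hγ := content_cshift e s hl hdvd hs γ
  have hδ := content_cshift e s hl hdvd hs δ
  have hltγ := γ.2.2.isLt
  have hltδ := δ.2.2.isLt
  simp only [nlt, hγ, hδ, Fin.lt_def]
  rw [show (cshift hl γ).2.2.val = (γ.2.2.val + 1) % l from rfl,
    show (cshift hl δ).2.2.val = (δ.2.2.val + 1) % l from rfl]
  rcases Nat.lt_or_ge (γ.2.2.val + 1) l with h1 | h1
  · rw [Nat.mod_eq_of_lt h1, if_neg (by omega)]
    rcases Nat.lt_or_ge (δ.2.2.val + 1) l with h2 | h2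
    · rw [Nat.mod_eq_of_lt h2, if_neg (by omega)]
      omega
    · have h2' : δ.2.2.val + 1 = l := by omega
      rw [if_pos h2', h2', Nat.mod_self]
      omega
  · have h1' : γ.2.2.val + 1 = l := by omega
    rw [if_pos h1', h1', Nat.mod_self]
    rcases Nat.lt_or_ge (δ.2.2.val + 1) l with h2 | h2
    · rw [Nat.mod_eq_of_lt h2, if_neg (by omega)]
      omega
    · have h2' : δ.2.2.val + 1 = l := by omega
      rw [if_pos h2', h2', Nat.mod_self]
      omega

lemma nle_cshift (hl : 0 < l) (he : 0 < e) (hdvd : l ∣ e)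
    (hs : ∀ c : Fin l, s c = ((c.val * (e / l) : ℕ) : ℤ)) {γ δ : MPNode l}
    (hr : res e s γ = res e s δ) :
    nle s (cshift hl γ) (cshift hl δ) ↔ nle s γ δ := by
  unfold nle
  rw [nlt_cshift e s hl he hdvd hs hr]
  refine or_congr Iff.rfl ⟨fun h => cshift_injective hl h, fun h => by rw [h]⟩

end

section

variable {l : ℕ} {e : ℕ} {s : Fin l → ℤ}

lemma shiftMP_part_cshift (hl : 0 < l) (lam : Multipartition l) (γ : MPNode l)
    (x : ℕ) :
    (shiftMP hl lam).part (cshift hl γ).2.2 x = lam.part γ.2.2 x := by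
  show lam.part ⟨(((γ.2.2.val + 1) % l) + (l - 1)) % l, _⟩ x = lam.part γ.2.2 x
  exact congrFun (congrArg lam.part (Fin.ext (idx1 hl γ.2.2.val γ.2.2.isLt))) x

lemma isAddable_cshift (hl : 0 < l) (lam : Multipartition l) (γ : MPNode l) :
    IsAddable (shiftMP hl lam) (cshift hl γ) ↔ IsAddable lam γ := by
  unfold IsAddable
  rw [show (cshift hl γ).2.1 = γ.2.1 from rfl, show (cshift hl γ).1 = γ.1 from rfl,
    shiftMP_part_cshift hl lam γ γ.1, shiftMP_part_cshift hl lam γ (γ.1 - 1)]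

lemma isRemovable_cshift (hl : 0 < l) (lam : Multipartition l) (γ : MPNode l) :
    IsRemovable (shiftMP hl lam) (cshift hl γ) ↔ IsRemovable lam γ := by
  unfold IsRemovable
  rw [show (cshift hl γ).2.1 = γ.2.1 from rfl, show (cshift hl γ).1 = γ.1 from rfl,
    shiftMP_part_cshift hl lam γ γ.1, shiftMP_part_cshift hl lam γ (γ.1 + 1)]

lemma isARNode_cshift (hl : 0 < l) (hdvd : l ∣ e)
    (hs : ∀ c : Fin l, s c = ((c.val * (e / l) : ℕ) : ℤ))
    (lam : Multipartition l) (i : ZMod e) (γ : MPNode l) :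
    IsARNode e s (shiftMP hl lam) (i + ((e / l : ℕ) : ZMod e)) (cshift hl γ) ↔
      IsARNode e s lam i γ := by
  unfold IsARNode
  rw [isAddable_cshift hl lam γ, isRemovable_cshift hl lam γ,
    res_cshift e s hl hdvd hs, add_left_inj]

end

end StmtAux
namespace StmtAux

section

variable {l : ℕ} (e : ℕ) (s : Fin l → ℤ)

lemma ncard_cshift (hl : 0 < l) (he : 0 < e) (hdvd : l ∣ e)
    (hs : ∀ c : Fin l, s c = ((c.val * (e / l) : ℕ) : ℤ))
    {P Q : MPNode l → Prop} (hPQ : ∀ η, Q (cshift hl η) ↔ P η)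
    {i : ZMod e} {γ δ : MPNode l} (hγ : res e s γ = i) (hδ : res e s δ = i) :
    {η | Q η ∧ res e s η = i + ((e / l : ℕ) : ZMod e) ∧
        nle s (cshift hl δ) η ∧ nle s η (cshift hl γ)}.ncard
      = {η | P η ∧ res e s η = i ∧ nle s δ η ∧ nle s η γ}.ncard := by
  have him : {η | Q η ∧ res e s η = i + ((e / l : ℕ) : ZMod e) ∧
        nle s (cshift hl δ) η ∧ nle s η (cshift hl γ)}
      = cshift hl '' {η | P η ∧ res e s η = i ∧ nle s δ η ∧ nle s η γ} := by
    ext η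
    simp only [Set.mem_setOf_eq, Set.mem_image]
    constructor
    · intro ⟨h1, h2, h3, h4⟩
      rw [← cshift_cunshift hl η] at h1 h2 h3 h4
      have hres : res e s (cunshift hl η) = i := by
        rw [res_cshift e s hl hdvd hs] at h2
        exact add_right_cancel h2
      exact ⟨cunshift hl η, ⟨(hPQ _).mp h1, hres,
        (nle_cshift e s hl he hdvd hs (hδ.trans hres.symm)).mp h3,
        (nle_cshift e s hl he hdvd hs (hres.trans hγ.symm)).mp h4⟩,
        cshift_cunshift hl η⟩
    · rintro ⟨η₀, ⟨h1, h2, h3, h4⟩, rfl⟩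
      exact ⟨(hPQ _).mpr h1, by rw [res_cshift e s hl hdvd hs, h2],
        (nle_cshift e s hl he hdvd hs (hδ.trans h2.symm)).mpr h3,
        (nle_cshift e s hl he hdvd hs (h2.trans hγ.symm)).mpr h4⟩
  rw [him]
  exact Set.ncard_image_of_injective _ (cshift_injective hl)

lemma survivingA_cshift (hl : 0 < l) (he : 0 < e) (hdvd : l ∣ e)
    (hs : ∀ c : Fin l, s c = ((c.val * (e / l) : ℕ) : ℤ))
    (lam : Multipartition l) (i : ZMod e) (γ : MPNode l) :
    SurvivingA e s (shiftMP hl lam) (i + ((e / l : ℕ) : ZMod e)) (cshift hl γ) ↔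
      SurvivingA e s lam i γ := by
  unfold SurvivingA
  constructor
  · rintro ⟨h1, h2, h3⟩
    have hadd := (isAddable_cshift hl lam γ).mp h1
    have hres : res e s γ = i := by
      rw [res_cshift e s hl hdvd hs] at h2
      exact add_right_cancel h2
    refine ⟨hadd, hres, fun δ hAR hle => ?_⟩
    have h4 := h3 (cshift hl δ) ((isARNode_cshift hl hdvd hs lam i δ).mpr hAR)
      ((nle_cshift e s hl he hdvd hs (hAR.2.trans hres.symm)).mpr hle)
    have e1 : {η | IsRemovable (shiftMP hl lam) η ∧
          res e s η = i + ((e / l : ℕ) : ZMod e) ∧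
          nle s (cshift hl δ) η ∧ nle s η (cshift hl γ)}.ncard
        = {η | IsRemovable lam η ∧ res e s η = i ∧ nle s δ η ∧ nle s η γ}.ncard :=
      ncard_cshift e s hl he hdvd hs (fun η => isRemovable_cshift hl lam η)
        hres hAR.2
    have e2 : {η | IsAddable (shiftMP hl lam) η ∧
          res e s η = i + ((e / l : ℕ) : ZMod e) ∧
          nle s (cshift hl δ) η ∧ nle s η (cshift hl γ)}.ncard
        = {η | IsAddable lam η ∧ res e s η = i ∧ nle s δ η ∧ nle s η γ}.ncard :=
      ncard_cshift e s hl he hdvd hs (fun η => isAddable_cshift hl lam η)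
        hres hAR.2
    rwa [e1, e2] at h4
  · rintro ⟨h1, h2, h3⟩
    refine ⟨(isAddable_cshift hl lam γ).mpr h1,
      by rw [res_cshift e s hl hdvd hs, h2], fun δ' hAR hle => ?_⟩
    obtain ⟨δ₀, rfl⟩ : ∃ δ₀, δ' = cshift hl δ₀ :=
      ⟨cunshift hl δ', (cshift_cunshift hl δ').symm⟩
    have hAR₀ : IsARNode e s lam i δ₀ := (isARNode_cshift hl hdvd hs lam i δ₀).mp hAR
    have hle₀ : nle s δ₀ γ :=
      (nle_cshift e s hl he hdvd hs (hAR₀.2.trans h2.symm)).mp hle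
    have h4 := h3 δ₀ hAR₀ hle₀
    have e1 : {η | IsRemovable (shiftMP hl lam) η ∧
          res e s η = i + ((e / l : ℕ) : ZMod e) ∧
          nle s (cshift hl δ₀) η ∧ nle s η (cshift hl γ)}.ncard
        = {η | IsRemovable lam η ∧ res e s η = i ∧ nle s δ₀ η ∧ nle s η γ}.ncard :=
      ncard_cshift e s hl he hdvd hs (fun η => isRemovable_cshift hl lam η)
        h2 hAR₀.2
    have e2 : {η | IsAddable (shiftMP hl lam) η ∧
          res e s η = i + ((e / l : ℕ) : ZMod e) ∧
          nle s (cshift hl δ₀) η ∧ nle s η (cshift hl γ)}.ncard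
        = {η | IsAddable lam η ∧ res e s η = i ∧ nle s δ₀ η ∧ nle s η γ}.ncard :=
      ncard_cshift e s hl he hdvd hs (fun η => isAddable_cshift hl lam η)
        h2 hAR₀.2
    rw [e1, e2]
    exact h4

lemma goodAddable_cshift (hl : 0 < l) (he : 0 < e) (hdvd : l ∣ e)
    (hs : ∀ c : Fin l, s c = ((c.val * (e / l) : ℕ) : ℤ))
    {lam : Multipartition l} {i : ZMod e} {γ : MPNode l}
    (h : GoodAddable e s lam i γ) :
    GoodAddable e s (shiftMP hl lam) (i + ((e / l : ℕ) : ZMod e)) (cshift hl γ) := by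
  obtain ⟨h1, h2⟩ := h
  refine ⟨(survivingA_cshift e s hl he hdvd hs lam i γ).mpr h1, fun δ' hδ' => ?_⟩
  obtain ⟨δ₀, rfl⟩ : ∃ δ₀, δ' = cshift hl δ₀ :=
    ⟨cunshift hl δ', (cshift_cunshift hl δ').symm⟩
  have h3 := (survivingA_cshift e s hl he hdvd hs lam i δ₀).mp hδ'
  exact (nle_cshift e s hl he hdvd hs (h3.2.1.trans h1.2.1.symm)).mpr (h2 δ₀ h3)

lemma addAt_cshift (hl : 0 < l) {lam mu : Multipartition l} {γ : MPNode l}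
    (h : AddAt lam γ mu) :
    AddAt (shiftMP hl lam) (cshift hl γ) (shiftMP hl mu) := by
  intro c a
  have hcomp : ((⟨(c.val + (l - 1)) % l, Nat.mod_lt _ hl⟩ : Fin l) = γ.2.2) ↔
      (c = (cshift hl γ).2.2) := by
    constructor
    · intro hh
      apply Fin.ext
      have h5 : c.val = ((c.val + (l - 1)) % l + 1) % l := (idx2 hl c.val c.isLt).symm
      have h6 : (c.val + (l - 1)) % l = γ.2.2.val := congrArg Fin.val hh
      rw [h5, h6]
      rfl
    · intro hh
      apply Fin.ext
      have h6 : c.val = (γ.2.2.val + 1) % l := congrArg Fin.val hh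
      rw [h6]
      show ((γ.2.2.val + 1) % l + (l - 1)) % l = γ.2.2.val
      exact idx1 hl γ.2.2.val γ.2.2.isLt
  show mu.part ⟨(c.val + (l - 1)) % l, Nat.mod_lt _ hl⟩ a = _
  rw [h ⟨(c.val + (l - 1)) % l, Nat.mod_lt _ hl⟩ a]
  rw [show (cshift hl γ).1 = γ.1 from rfl]
  by_cases hc : c = (cshift hl γ).2.2 ∧ a = γ.1
  · rw [if_pos ⟨hcomp.mpr hc.1, hc.2⟩, if_pos hc]
    rfl
  · rw [if_neg (fun contra => hc ⟨hcomp.mp contra.1, contra.2⟩), if_neg hc]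
    rfl

lemma frel_cshift (hl : 0 < l) (he : 0 < e) (hdvd : l ∣ e)
    (hs : ∀ c : Fin l, s c = ((c.val * (e / l) : ℕ) : ℤ))
    {lam mu : Multipartition l} {i : ZMod e} (h : FRel e s i lam mu) :
    FRel e s (i + ((e / l : ℕ) : ZMod e)) (shiftMP hl lam) (shiftMP hl mu) := by
  obtain ⟨γ, hg, hadd⟩ := h
  exact ⟨cshift hl γ, goodAddable_cshift e s hl he hdvd hs hg,
    addAt_cshift hl hadd⟩

lemma fseq_cshift (hl : 0 < l) (he : 0 < e) (hdvd : l ∣ e)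
    (hs : ∀ c : Fin l, s c = ((c.val * (e / l) : ℕ) : ℤ)) :
    ∀ (is : List (ZMod e)) (lam mu : Multipartition l),
      FSeq e s is lam mu →
      FSeq e s (is.map (· + ((e / l : ℕ) : ZMod e))) (shiftMP hl lam)
        (shiftMP hl mu)
  | [], lam, mu, h => by
    simp only [List.map_nil]
    show shiftMP hl mu = shiftMP hl lam
    rw [show mu = lam from h]
  | (i :: is), lam, mu, h => by
    obtain ⟨nu, h1, h2⟩ := h
    exact ⟨shiftMP hl nu, fseq_cshift hl he hdvd hs is lam nu h1,
      frel_cshift e s hl he hdvd hs h2⟩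

end

end StmtAux

/-- For the multicharge `s = (0, e/l, …, (l-1)e/l)` (with `l ∣ e`), the set
`Φ_{e,s}(n)` of Uglov `l`-partitions of `n` is stable under the cyclic shift
`(λ¹, …, λˡ) ↦ (λˡ, λ¹, …, λ^{l-1})`. -/
theorem stmt2 (e l n : ℕ) (he : 1 < e) (hl : 0 < l) (hdvd : l ∣ e)
    (s : Fin l → ℤ) (hs : ∀ c : Fin l, s c = ((c.val * (e / l) : ℕ) : ℤ))
    (lam : Multipartition l) (hlam : lam ∈ UglovSet e s n)
    (mu : Multipartition l)
    (hmu : ∀ (c : Fin l) (a : ℕ),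
      mu.part c a = lam.part ⟨(c.val + (l - 1)) % l, Nat.mod_lt _ hl⟩ a) :
    mu ∈ UglovSet e s n := by
  obtain ⟨is, hlen, hseq⟩ := hlam
  have he0 : 0 < e := by omega
  refine ⟨is.map (· + ((e / l : ℕ) : ZMod e)), by rw [List.length_map, hlen], ?_⟩
  have hsh := StmtAux.fseq_cshift e s hl he0 hdvd hs is (Multipartition.empty l)
    lam hseq
  have hempty : StmtAux.shiftMP hl (Multipartition.empty l) =
      Multipartition.empty l := StmtAux.mp_ext (fun _ _ => rfl)
  have hmu' : mu = StmtAux.shiftMP hl lam := StmtAux.mp_ext (fun c a => hmu c a)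
  rw [hmu', ← hempty]
  exact hsh
end

section
/- Let e>1 and l≥1 with l dividing e, and let s=(0,e/l,…,(l−1)e/l). Let λ be any l-partition and μ:=(λ^l,λ^1,…,λ^{l−1}) its cyclic shift. Then the map σ sending a node (a,b,c) to (a,b,c+1) for c<l and (a,b,l) to (a,b,1) is a bijection from the set of addable (respectively removable) nodes of λ to the set of addable (respectively removable) nodes of μ; it sends i-nodes of λ (residues computed with (e,s)) to (i+e/l)-nodes of μ; and for any two addable or removable i-nodes γ, δ of λ one has γ≺_s δ if and only if σ(γ)≺_s σ(δ). Consequently w_i^{(e,s)}(λ)=w_{i+e/l}^{(e,s)}(μ) for every i∈ℤ/eℤ. -/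
set_option maxRecDepth 8000 in
/-- With `s = (0, e/l, …, (l-1)e/l)` and `μ = (λˡ, λ¹, …, λ^{l-1})` the cyclic
shift of `λ`, the map `σ : (a,b,c) ↦ (a,b,c+1)` (third coordinate mod `l`) is a
bijection from the addable (resp. removable) nodes of `λ` onto those of `μ`;
it shifts residues by `e/l`; and it preserves the order `≺_s` on the addable or
removable `i`-nodes.  Consequently `w_i^{(e,s)}(λ) = w_{i+e/l}^{(e,s)}(μ)`:
this is expressed by the last clause, stating that `σ` maps the addable or
removable `i`-nodes of `λ` onto the addable or removable `(i+e/l)`-nodes of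
`μ`. -/
theorem stmt7 (e l : ℕ) (he : 1 < e) (hl : 0 < l) (hdvd : l ∣ e)
    (s : Fin l → ℤ) (hs : ∀ c : Fin l, s c = ((c.val * (e / l) : ℕ) : ℤ))
    (lam mu : Multipartition l)
    (hmu : ∀ (c : Fin l) (a : ℕ),
      mu.part c a = lam.part ⟨(c.val + (l - 1)) % l, Nat.mod_lt _ hl⟩ a) :
    (∀ γ : MPNode l, IsAddable lam γ ↔ IsAddable mu (cshift hl γ)) ∧
    (∀ γ : MPNode l, IsRemovable lam γ ↔ IsRemovable mu (cshift hl γ)) ∧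
    (∀ γ : MPNode l, IsAddable lam γ ∨ IsRemovable lam γ →
      res e s (cshift hl γ) = res e s γ + ((e / l : ℕ) : ZMod e)) ∧
    (∀ (i : ZMod e) (γ δ : MPNode l), IsARNode e s lam i γ →
      IsARNode e s lam i δ →
      (nlt s γ δ ↔ nlt s (cshift hl γ) (cshift hl δ))) ∧
    (∀ (i : ZMod e) (η : MPNode l),
      IsARNode e s mu (i + ((e / l : ℕ) : ZMod e)) η →
      ∃ γ : MPNode l, IsARNode e s lam i γ ∧ cshift hl γ = η) := by
  set K : ℕ := e / l with hKdef
  have kl : l * K = e := Nat.mul_div_cancel' hdvd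
  have hepos : (0:ℤ) < (e:ℤ) := by exact_mod_cast (by omega : 0 < e)
  -- part transfer
  have hmu' : ∀ (c : Fin l) (a : ℕ),
      mu.part ⟨(c.val + 1) % l, Nat.mod_lt _ hl⟩ a = lam.part c a := by
    intro c a
    rw [hmu]
    have hval : ((c.val + 1) % l + (l - 1)) % l = c.val := by
      rcases Nat.lt_or_ge (c.val + 1) l with h | h
      · rw [Nat.mod_eq_of_lt h]
        have h2 : c.val + 1 + (l - 1) = c.val + l := by omega
        rw [h2, Nat.add_mod_right, Nat.mod_eq_of_lt c.isLt]
      · have h1 : c.val + 1 = l := by have := c.isLt; omega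
        rw [h1, Nat.mod_self, Nat.zero_add, Nat.mod_eq_of_lt (by omega)]
        omega
    congr 1
    exact Fin.ext hval
  have hAdd : ∀ γ : MPNode l, IsAddable lam γ ↔ IsAddable mu (cshift hl γ) := by
    intro γ
    have hp : mu.part (⟨(γ.2.2.val + 1) % l, Nat.mod_lt _ hl⟩ : Fin l)
        = lam.part γ.2.2 := funext (hmu' γ.2.2)
    simp only [IsAddable, cshift, hp]
  have hRem : ∀ γ : MPNode l, IsRemovable lam γ ↔ IsRemovable mu (cshift hl γ) := by
    intro γ
    have hp : mu.part (⟨(γ.2.2.val + 1) % l, Nat.mod_lt _ hl⟩ : Fin l)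
        = lam.part γ.2.2 := funext (hmu' γ.2.2)
    simp only [IsRemovable, cshift, hp]
  -- content shift
  have hcontent : ∀ γ : MPNode l,
      (γ.2.2.val + 1 < l → content s (cshift hl γ) = content s γ + (K:ℤ)) ∧
      (γ.2.2.val + 1 = l →
        content s (cshift hl γ) = content s γ + (K:ℤ) - e) := by
    intro γ
    constructor
    · intro h
      simp only [content, cshift, hs]
      rw [Nat.mod_eq_of_lt h]
      push_cast
      ring
    · intro h
      simp only [content, cshift, hs]
      rw [h, Nat.mod_self]
      have h1 : (γ.2.2.val : ℤ) * K + K = e := by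
        have h2 : (γ.2.2.val + 1) * K = e := by rw [h]; exact kl
        have h2' : ((γ.2.2.val : ℤ) + 1) * K = e := by exact_mod_cast h2
        linear_combination h2'
      push_cast
      linarith
  have hres : ∀ γ : MPNode l,
      res e s (cshift hl γ) = res e s γ + (K : ZMod e) := by
    intro γ
    unfold res
    rcases Nat.lt_or_ge (γ.2.2.val + 1) l with h | h
    · rw [(hcontent γ).1 h]; push_cast; ring
    · have h' : γ.2.2.val + 1 = l := by have := γ.2.2.isLt; omega
      rw [(hcontent γ).2 h']
      push_cast
      rw [ZMod.natCast_self]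
      ring
  have hdvd2 : ∀ γ δ : MPNode l, res e s γ = res e s δ →
      (e:ℤ) ∣ (content s δ - content s γ) := by
    intro γ δ h
    unfold res at h
    exact_mod_cast ((ZMod.intCast_eq_intCast_iff _ _ _).mp h).dvd
  -- forward order preservation
  have hlt : ∀ γ δ : MPNode l, (e:ℤ) ∣ (content s δ - content s γ) →
      nlt s γ δ → nlt s (cshift hl γ) (cshift hl δ) := by
    intro γ δ hdv hltgd
    have hγ := hcontent γ
    have hδ := hcontent δ
    have hγlt := γ.2.2.isLt
    have hδlt := δ.2.2.isLt
    rcases hltgd with hc | ⟨hc, hcomp⟩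
    · have hge : content s γ + e ≤ content s δ := by
        obtain ⟨m, hm⟩ := hdv
        have h0 : 0 < (e:ℤ) * m := by rw [← hm]; linarith
        have h1 : 1 ≤ m := by nlinarith
        nlinarith
      rcases Nat.lt_or_ge (γ.2.2.val + 1) l with hg | hg
      · rcases Nat.lt_or_ge (δ.2.2.val + 1) l with hd | hd
        · left; rw [hγ.1 hg, hδ.1 hd]; linarith
        · have hd' : δ.2.2.val + 1 = l := by omega
          rcases lt_or_eq_of_le hge with hlt2 | heq
          · left; rw [hγ.1 hg, hδ.2 hd']; linarith
          · right
            constructor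
            · rw [hγ.1 hg, hδ.2 hd']; linarith
            · rw [Fin.lt_def]
              show (δ.2.2.val + 1) % l < (γ.2.2.val + 1) % l
              rw [hd', Nat.mod_self, Nat.mod_eq_of_lt hg]
              omega
      · have hg' : γ.2.2.val + 1 = l := by omega
        left
        rcases Nat.lt_or_ge (δ.2.2.val + 1) l with hd | hd
        · rw [hγ.2 hg', hδ.1 hd]; linarith
        · have hd' : δ.2.2.val + 1 = l := by omega
          rw [hγ.2 hg', hδ.2 hd']; linarith
    · have hγc : δ.2.2.val < γ.2.2.val := hcomp
      have hd : δ.2.2.val + 1 < l := by omega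
      rcases Nat.lt_or_ge (γ.2.2.val + 1) l with hg | hg
      · right
        constructor
        · rw [hγ.1 hg, hδ.1 hd, hc]
        · rw [Fin.lt_def]
          show (δ.2.2.val + 1) % l < (γ.2.2.val + 1) % l
          rw [Nat.mod_eq_of_lt hg, Nat.mod_eq_of_lt hd]
          omega
      · have hg' : γ.2.2.val + 1 = l := by omega
        left
        rw [hγ.2 hg', hδ.1 hd]
        linarith
  have hasym : ∀ γ δ : MPNode l, nlt s γ δ → ¬ nlt s δ γ := by
    intro γ δ h1 h2
    rcases h1 with h1 | ⟨h1, h1'⟩ <;> rcases h2 with h2 | ⟨h2, h2'⟩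
    · linarith
    · linarith
    · linarith
    · exact absurd (h1'.trans h2') (lt_irrefl _)
  refine ⟨hAdd, hRem, fun γ _ => hres γ, ?_, ?_⟩
  · intro i γ δ hγi hδi
    have hdv : (e:ℤ) ∣ (content s δ - content s γ) :=
      hdvd2 γ δ (by rw [hγi.2, hδi.2])
    have hdv' : (e:ℤ) ∣ (content s γ - content s δ) :=
      hdvd2 δ γ (by rw [hγi.2, hδi.2])
    constructor
    · exact hlt γ δ hdv
    · intro h
      rcases lt_trichotomy (content s γ) (content s δ) with hc | hc | hc
      · exact Or.inl hc
      · rcases lt_trichotomy δ.2.2 γ.2.2 with hcc | hcc | hcc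
        · exact Or.inr ⟨hc, hcc⟩
        · exfalso
          have hveq : δ.2.2.val = γ.2.2.val := by rw [hcc]
          have hcomp : (cshift hl γ).2.2 = (cshift hl δ).2.2 := by
            simp only [cshift]
            exact Fin.ext (by simp [hveq])
          have hconteq : content s (cshift hl γ) = content s (cshift hl δ) := by
            rcases Nat.lt_or_ge (γ.2.2.val + 1) l with hg | hg
            · rw [(hcontent γ).1 hg, (hcontent δ).1 (by omega), hc]
            · have hg' : γ.2.2.val + 1 = l := by have := γ.2.2.isLt; omega
              rw [(hcontent γ).2 hg', (hcontent δ).2 (by omega), hc]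
          rcases h with h | ⟨_, h⟩
          · linarith
          · rw [hcomp] at h; exact lt_irrefl _ h
        · exact absurd h (hasym _ _ (hlt δ γ hdv' (Or.inr ⟨hc.symm, hcc⟩)))
      · exact absurd h (hasym _ _ (hlt δ γ hdv' (Or.inl hc)))
  · intro i η hη
    set γ : MPNode l := (η.1, η.2.1, ⟨(η.2.2.val + (l - 1)) % l, Nat.mod_lt _ hl⟩)
      with hγdef
    have hval : ((η.2.2.val + (l - 1)) % l + 1) % l = η.2.2.val := by
      rcases Nat.eq_zero_or_pos η.2.2.val with h0 | h0
      · rw [h0, Nat.zero_add, Nat.mod_eq_of_lt (by omega : l - 1 < l)]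
        have h2 : l - 1 + 1 = l := by omega
        rw [h2, Nat.mod_self]
      · have h2 : η.2.2.val + (l - 1) = (η.2.2.val - 1) + l := by omega
        rw [h2, Nat.add_mod_right,
          Nat.mod_eq_of_lt (by have := η.2.2.isLt; omega : η.2.2.val - 1 < l)]
        have h3 : η.2.2.val - 1 + 1 = η.2.2.val := by omega
        rw [h3, Nat.mod_eq_of_lt η.2.2.isLt]
    have hsh : cshift hl γ = η := by
      show (η.1, η.2.1, (⟨((η.2.2.val + (l - 1)) % l + 1) % l,
        Nat.mod_lt _ hl⟩ : Fin l)) = η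
      rw [show (⟨((η.2.2.val + (l - 1)) % l + 1) % l,
            Nat.mod_lt _ hl⟩ : Fin l) = η.2.2 from Fin.ext hval]
    refine ⟨γ, ⟨?_, ?_⟩, hsh⟩
    · have h := hη.1
      rw [← hsh] at h
      rcases h with h | h
      · exact Or.inl ((hAdd γ).mpr h)
      · exact Or.inr ((hRem γ).mpr h)
    · have h1 := hres γ
      rw [hsh, hη.2] at h1
      exact (add_right_cancel h1.symm)
end

section
/- Let e>1 and l≥1 with l dividing e, and let s=(0,e/l,…,(l−1)e/l). Let λ be an l-partition and μ:=(λ^l,λ^1,…,λ^{l−1}) its cyclic shift. Then for every i∈ℤ/eℤ, a node γ=(a,b,c) is the good addable (respectively good removable) i-node of λ if and only if the node (a,b,c+1) (third coordinate taken modulo l, with c=l mapped to 1) is the good addable (respectively good removable) (i+e/l)-node of μ. -/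
section Aux

private lemma modh1 {l : ℕ} (hl : 0 < l) {c : ℕ} (h : c < l) :
    ((c + 1) % l + (l - 1)) % l = c := by
  rcases Nat.lt_or_ge (c + 1) l with h' | h'
  · rw [Nat.mod_eq_of_lt h', show c + 1 + (l - 1) = c + l by omega,
      Nat.add_mod_right, Nat.mod_eq_of_lt h]
  · have hc : c + 1 = l := by omega
    rw [hc, Nat.mod_self, Nat.zero_add,
      Nat.mod_eq_of_lt (show l - 1 < l by omega)]
    omega

private lemma modh2 {l : ℕ} (hl : 0 < l) {c : ℕ} (h : c < l) :
    ((c + (l - 1)) % l + 1) % l = c := by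
  rcases Nat.eq_zero_or_pos c with h0 | h0
  · subst h0
    rw [Nat.zero_add, Nat.mod_eq_of_lt (show l - 1 < l by omega),
      show l - 1 + 1 = l by omega, Nat.mod_self]
  · rw [show c + (l - 1) = (c - 1) + l by omega, Nat.add_mod_right,
      Nat.mod_eq_of_lt (show c - 1 < l by omega), show c - 1 + 1 = c by omega,
      Nat.mod_eq_of_lt h]

private lemma cshift_inj {l : ℕ} (hl : 0 < l) : Function.Injective (cshift hl) := by
  rintro ⟨a, b, c⟩ ⟨a', b', c'⟩ h
  simp only [cshift, Prod.mk.injEq, Fin.mk.injEq] at h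
  obtain ⟨h1, h2, h3⟩ := h
  refine Prod.ext h1 (Prod.ext h2 (Fin.ext ?_))
  have a1 := modh1 hl c.isLt
  have a2 := modh1 hl c'.isLt
  rw [← a1, ← a2, h3]

private lemma cshift_surj {l : ℕ} (hl : 0 < l) (δ : MPNode l) :
    ∃ γ, cshift hl γ = δ := by
  refine ⟨(δ.1, δ.2.1, ⟨(δ.2.2.val + (l - 1)) % l, Nat.mod_lt _ hl⟩), ?_⟩
  refine Prod.ext rfl (Prod.ext rfl (Fin.ext ?_))
  exact modh2 hl δ.2.2.isLt

variable {e l : ℕ} (he : 0 < e) (hl : 0 < l) (hdvd : l ∣ e) {s : Fin l → ℤ}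
  (hs : ∀ c : Fin l, s c = ((c.val * (e / l) : ℕ) : ℤ))
  {lam mu : Multipartition l}
  (hmu : ∀ (c : Fin l) (a : ℕ),
    mu.part c a = lam.part ⟨(c.val + (l - 1)) % l, Nat.mod_lt _ hl⟩ a)
  {i : ZMod e}

include hdvd hs in
private lemma content_cshift (γ : MPNode l) :
    content s (cshift hl γ) =
      content s γ + ((e / l : ℕ) : ℤ) - (if γ.2.2.val + 1 = l then (e : ℤ) else 0) := by
  have hle : l * (e / l) = e := Nat.mul_div_cancel' hdvd
  simp only [content, cshift, hs]
  by_cases h : γ.2.2.val + 1 = l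
  · rw [if_pos h]
    have h0 : (γ.2.2.val + 1) % l = 0 := by rw [h, Nat.mod_self]
    rw [h0]
    have h2 : γ.2.2.val * (e / l) + e / l = e := by
      have h3 : (γ.2.2.val + 1) * (e / l) = e := by rw [h]; exact hle
      rw [Nat.add_mul, Nat.one_mul] at h3
      exact h3
    rw [Nat.zero_mul]
    omega
  · rw [if_neg h]
    have hlt : γ.2.2.val + 1 < l := by have := γ.2.2.isLt; omega
    rw [Nat.mod_eq_of_lt hlt, Nat.add_mul, Nat.one_mul]
    omega

include hdvd hs in
private lemma res_cshift (γ : MPNode l) :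
    res e s (cshift hl γ) = res e s γ + ((e / l : ℕ) : ZMod e) := by
  unfold res
  rw [content_cshift hl hdvd hs γ]
  by_cases h : γ.2.2.val + 1 = l
  · rw [if_pos h]
    simp only [Int.cast_sub, Int.cast_add, Int.cast_natCast, ZMod.natCast_self,
      sub_zero]
  · rw [if_neg h]
    simp only [sub_zero, Int.cast_add, Int.cast_natCast]

private lemma res_dvd {x y : MPNode l} (h : res e s x = res e s y) :
    (e : ℤ) ∣ content s y - content s x := by
  unfold res at h
  rw [ZMod.intCast_eq_intCast_iff] at h
  exact h.dvd

include he hdvd hs in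
private lemma nlt_cshift {γ δ : MPNode l}
    (hcong : (e : ℤ) ∣ content s δ - content s γ) :
    nlt s γ δ ↔ nlt s (cshift hl γ) (cshift hl δ) := by
  have h1 : content s γ < content s δ → content s γ + e ≤ content s δ := by
    intro h
    have := Int.le_of_dvd (by omega) hcong
    omega
  have h2 : content s δ < content s γ → content s δ + e ≤ content s γ := by
    intro h
    have := Int.le_of_dvd (by omega) (dvd_sub_comm.mp hcong)
    omega
  have hq1 : 1 ≤ e / l := (Nat.one_le_div_iff hl).mpr (Nat.le_of_dvd he hdvd)
  have hqe : e / l ≤ e := Nat.div_le_self _ _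
  have hγ := content_cshift hl hdvd hs γ
  have hδ := content_cshift hl hdvd hs δ
  have hcγ : (cshift hl γ).2.2.val = (γ.2.2.val + 1) % l := rfl
  have hcδ : (cshift hl δ).2.2.val = (δ.2.2.val + 1) % l := rfl
  have hg2 := γ.2.2.isLt
  have hd2 := δ.2.2.isLt
  simp only [nlt, Fin.lt_def, hγ, hδ, hcγ, hcδ]
  by_cases hg : γ.2.2.val + 1 = l <;> by_cases hd : δ.2.2.val + 1 = l
  · rw [if_pos hg, if_pos hd, hg, hd, Nat.mod_self]
    omega
  · rw [if_pos hg, if_neg hd, hg, Nat.mod_self,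
      Nat.mod_eq_of_lt (show δ.2.2.val + 1 < l by omega)]
    omega
  · rw [if_neg hg, if_pos hd, hd, Nat.mod_self,
      Nat.mod_eq_of_lt (show γ.2.2.val + 1 < l by omega)]
    omega
  · rw [if_neg hg, if_neg hd,
      Nat.mod_eq_of_lt (show γ.2.2.val + 1 < l by omega),
      Nat.mod_eq_of_lt (show δ.2.2.val + 1 < l by omega)]
    omega

include he hdvd hs in
private lemma nle_cshift {γ δ : MPNode l}
    (hcong : (e : ℤ) ∣ content s δ - content s γ) :
    nle s γ δ ↔ nle s (cshift hl γ) (cshift hl δ) := by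
  unfold nle
  exact or_congr (nlt_cshift he hl hdvd hs hcong)
    ⟨fun h => congrArg _ h, fun h => cshift_inj hl h⟩

include hmu in
private lemma part_cshift (γ : MPNode l) (a : ℕ) :
    mu.part (cshift hl γ).2.2 a = lam.part γ.2.2 a := by
  rw [hmu]
  congr 1
  apply Fin.ext
  exact modh1 hl γ.2.2.isLt

include hmu in
private lemma addable_cshift (γ : MPNode l) :
    IsAddable mu (cshift hl γ) ↔ IsAddable lam γ := by
  have hp := part_cshift hl hmu γ
  simp only [IsAddable]
  have e1 : (cshift hl γ).1 = γ.1 := rfl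
  have e2 : (cshift hl γ).2.1 = γ.2.1 := rfl
  rw [e1, e2, hp γ.1, hp (γ.1 - 1)]

include hmu in
private lemma removable_cshift (γ : MPNode l) :
    IsRemovable mu (cshift hl γ) ↔ IsRemovable lam γ := by
  have hp := part_cshift hl hmu γ
  simp only [IsRemovable]
  have e1 : (cshift hl γ).1 = γ.1 := rfl
  have e2 : (cshift hl γ).2.1 = γ.2.1 := rfl
  rw [e1, e2, hp γ.1, hp (γ.1 + 1)]

include hdvd hs hmu in
private lemma arnode_cshift (γ : MPNode l) :
    IsARNode e s mu (i + ((e / l : ℕ) : ZMod e)) (cshift hl γ) ↔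
      IsARNode e s lam i γ := by
  unfold IsARNode
  rw [addable_cshift hl hmu, removable_cshift hl hmu, res_cshift hl hdvd hs,
    add_left_inj]

include he hdvd hs in
private lemma set_shift {P Q : MPNode l → Prop}
    (hPQ : ∀ η, Q (cshift hl η) ↔ P η)
    {δ γ : MPNode l} (hδ : res e s δ = i) (hγ : res e s γ = i) :
    {η | Q η ∧ res e s η = i + ((e / l : ℕ) : ZMod e) ∧
        nle s (cshift hl δ) η ∧ nle s η (cshift hl γ)} =
      cshift hl '' {η | P η ∧ res e s η = i ∧ nle s δ η ∧ nle s η γ} := by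
  ext η'
  obtain ⟨η, rfl⟩ := cshift_surj hl η'
  simp only [Set.mem_image, Set.mem_setOf_eq]
  constructor
  · rintro ⟨hq, hres, hn1, hn2⟩
    have hres' : res e s η = i := by
      rw [res_cshift hl hdvd hs, add_left_inj] at hres
      exact hres
    refine ⟨η, ⟨(hPQ η).mp hq, hres', ?_, ?_⟩, rfl⟩
    · exact (nle_cshift he hl hdvd hs (res_dvd (hδ.trans hres'.symm))).mpr hn1
    · exact (nle_cshift he hl hdvd hs (res_dvd (hres'.trans hγ.symm))).mpr hn2
  · rintro ⟨η2, ⟨hp, hres2, hn1, hn2⟩, heq⟩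
    obtain rfl : η2 = η := cshift_inj hl heq
    refine ⟨(hPQ η2).mpr hp, ?_, ?_, ?_⟩
    · rw [res_cshift hl hdvd hs, hres2]
    · exact (nle_cshift he hl hdvd hs (res_dvd (hδ.trans hres2.symm))).mp hn1
    · exact (nle_cshift he hl hdvd hs (res_dvd (hres2.trans hγ.symm))).mp hn2

include he hdvd hs hmu in
private lemma survA_iff (γ : MPNode l) :
    SurvivingA e s lam i γ ↔
      SurvivingA e s mu (i + ((e / l : ℕ) : ZMod e)) (cshift hl γ) := by
  constructor
  · rintro ⟨hadd, hres, hcond⟩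
    refine ⟨(addable_cshift hl hmu γ).mpr hadd,
      by rw [res_cshift hl hdvd hs, hres], ?_⟩
    intro δ' hδ' hle'
    obtain ⟨δ, rfl⟩ := cshift_surj hl δ'
    have hAR : IsARNode e s lam i δ := (arnode_cshift hl hdvd hs hmu δ).mp hδ'
    have hδres : res e s δ = i := hAR.2
    have hcong : (e : ℤ) ∣ content s γ - content s δ :=
      res_dvd (hδres.trans hres.symm)
    have hle : nle s δ γ := (nle_cshift he hl hdvd hs hcong).mpr hle'
    have hlt := hcond δ hAR hle
    rw [set_shift he hl hdvd hs (removable_cshift hl hmu) hδres hres,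
      set_shift he hl hdvd hs (addable_cshift hl hmu) hδres hres,
      Set.ncard_image_of_injective _ (cshift_inj hl),
      Set.ncard_image_of_injective _ (cshift_inj hl)]
    exact hlt
  · rintro ⟨hadd, hres, hcond⟩
    have hres0 : res e s γ = i := by
      rw [res_cshift hl hdvd hs, add_left_inj] at hres
      exact hres
    refine ⟨(addable_cshift hl hmu γ).mp hadd, hres0, ?_⟩
    intro δ hδ hle
    have hδres : res e s δ = i := hδ.2
    have hcong : (e : ℤ) ∣ content s γ - content s δ :=
      res_dvd (hδres.trans hres0.symm)
    have hlt := hcond (cshift hl δ) ((arnode_cshift hl hdvd hs hmu δ).mpr hδ)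
      ((nle_cshift he hl hdvd hs hcong).mp hle)
    rw [set_shift he hl hdvd hs (removable_cshift hl hmu) hδres hres0,
      set_shift he hl hdvd hs (addable_cshift hl hmu) hδres hres0,
      Set.ncard_image_of_injective _ (cshift_inj hl),
      Set.ncard_image_of_injective _ (cshift_inj hl)] at hlt
    exact hlt

include he hdvd hs hmu in
private lemma survR_iff (γ : MPNode l) :
    SurvivingR e s lam i γ ↔
      SurvivingR e s mu (i + ((e / l : ℕ) : ZMod e)) (cshift hl γ) := by
  constructor
  · rintro ⟨hrem, hres, hcond⟩
    refine ⟨(removable_cshift hl hmu γ).mpr hrem,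
      by rw [res_cshift hl hdvd hs, hres], ?_⟩
    intro δ' hδ' hle'
    obtain ⟨δ, rfl⟩ := cshift_surj hl δ'
    have hAR : IsARNode e s lam i δ := (arnode_cshift hl hdvd hs hmu δ).mp hδ'
    have hδres : res e s δ = i := hAR.2
    have hcong : (e : ℤ) ∣ content s δ - content s γ :=
      res_dvd (hres.trans hδres.symm)
    have hle : nle s γ δ := (nle_cshift he hl hdvd hs hcong).mpr hle'
    have hlt := hcond δ hAR hle
    rw [set_shift he hl hdvd hs (addable_cshift hl hmu) hres hδres,
      set_shift he hl hdvd hs (removable_cshift hl hmu) hres hδres,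
      Set.ncard_image_of_injective _ (cshift_inj hl),
      Set.ncard_image_of_injective _ (cshift_inj hl)]
    exact hlt
  · rintro ⟨hrem, hres, hcond⟩
    have hres0 : res e s γ = i := by
      rw [res_cshift hl hdvd hs, add_left_inj] at hres
      exact hres
    refine ⟨(removable_cshift hl hmu γ).mp hrem, hres0, ?_⟩
    intro δ hδ hle
    have hδres : res e s δ = i := hδ.2
    have hcong : (e : ℤ) ∣ content s δ - content s γ :=
      res_dvd (hres0.trans hδres.symm)
    have hlt := hcond (cshift hl δ) ((arnode_cshift hl hdvd hs hmu δ).mpr hδ)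
      ((nle_cshift he hl hdvd hs hcong).mp hle)
    rw [set_shift he hl hdvd hs (addable_cshift hl hmu) hres0 hδres,
      set_shift he hl hdvd hs (removable_cshift hl hmu) hres0 hδres,
      Set.ncard_image_of_injective _ (cshift_inj hl),
      Set.ncard_image_of_injective _ (cshift_inj hl)] at hlt
    exact hlt

include he hdvd hs hmu in
private lemma goodA_iff (γ : MPNode l) :
    GoodAddable e s lam i γ ↔
      GoodAddable e s mu (i + ((e / l : ℕ) : ZMod e)) (cshift hl γ) := by
  constructor
  · rintro ⟨hsur, hmax⟩
    refine ⟨(survA_iff he hl hdvd hs hmu γ).mp hsur, ?_⟩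
    intro δ' hδ'
    obtain ⟨δ, rfl⟩ := cshift_surj hl δ'
    have hsδ : SurvivingA e s lam i δ := (survA_iff he hl hdvd hs hmu δ).mpr hδ'
    have hcong : (e : ℤ) ∣ content s γ - content s δ :=
      res_dvd (hsδ.2.1.trans hsur.2.1.symm)
    exact (nle_cshift he hl hdvd hs hcong).mp (hmax δ hsδ)
  · rintro ⟨hsur, hmax⟩
    have hsγ : SurvivingA e s lam i γ := (survA_iff he hl hdvd hs hmu γ).mpr hsur
    refine ⟨hsγ, ?_⟩
    intro δ hδ
    have hcong : (e : ℤ) ∣ content s γ - content s δ :=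
      res_dvd (hδ.2.1.trans hsγ.2.1.symm)
    exact (nle_cshift he hl hdvd hs hcong).mpr
      (hmax (cshift hl δ) ((survA_iff he hl hdvd hs hmu δ).mp hδ))

include he hdvd hs hmu in
private lemma goodR_iff (γ : MPNode l) :
    GoodRemovable e s lam i γ ↔
      GoodRemovable e s mu (i + ((e / l : ℕ) : ZMod e)) (cshift hl γ) := by
  constructor
  · rintro ⟨hsur, hmax⟩
    refine ⟨(survR_iff he hl hdvd hs hmu γ).mp hsur, ?_⟩
    intro δ' hδ'
    obtain ⟨δ, rfl⟩ := cshift_surj hl δ'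
    have hsδ : SurvivingR e s lam i δ := (survR_iff he hl hdvd hs hmu δ).mpr hδ'
    have hcong : (e : ℤ) ∣ content s δ - content s γ :=
      res_dvd (hsur.2.1.trans hsδ.2.1.symm)
    exact (nle_cshift he hl hdvd hs hcong).mp (hmax δ hsδ)
  · rintro ⟨hsur, hmax⟩
    have hsγ : SurvivingR e s lam i γ := (survR_iff he hl hdvd hs hmu γ).mpr hsur
    refine ⟨hsγ, ?_⟩
    intro δ hδ
    have hcong : (e : ℤ) ∣ content s δ - content s γ :=
      res_dvd (hsγ.2.1.trans hδ.2.1.symm)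
    exact (nle_cshift he hl hdvd hs hcong).mpr
      (hmax (cshift hl δ) ((survR_iff he hl hdvd hs hmu δ).mp hδ))

end Aux

/-- With `s = (0, e/l, …, (l-1)e/l)` and `μ = (λˡ, λ¹, …, λ^{l-1})` the cyclic
shift of `λ`: a node `γ = (a,b,c)` is the good addable (resp. good removable)
`i`-node of `λ` if and only if `(a,b,c+1)` (third coordinate mod `l`) is the
good addable (resp. good removable) `(i+e/l)`-node of `μ`. -/
theorem stmt8 (e l : ℕ) (he : 1 < e) (hl : 0 < l) (hdvd : l ∣ e)
    (s : Fin l → ℤ) (hs : ∀ c : Fin l, s c = ((c.val * (e / l) : ℕ) : ℤ))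
    (lam mu : Multipartition l)
    (hmu : ∀ (c : Fin l) (a : ℕ),
      mu.part c a = lam.part ⟨(c.val + (l - 1)) % l, Nat.mod_lt _ hl⟩ a)
    (i : ZMod e) (γ : MPNode l) :
    (GoodAddable e s lam i γ ↔
      GoodAddable e s mu (i + ((e / l : ℕ) : ZMod e)) (cshift hl γ)) ∧
    (GoodRemovable e s lam i γ ↔
      GoodRemovable e s mu (i + ((e / l : ℕ) : ZMod e)) (cshift hl γ)) := by
  exact ⟨goodA_iff (show 0 < e by omega) hl hdvd hs hmu γ,
    goodR_iff (show 0 < e by omega) hl hdvd hs hmu γ⟩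
end

section
/- Let e>1, let l divide e and let k divide l. Set s=(0,e/l,…,(l−1)e/l)∈ℤ^l, v=(0,e/l,…,(k−1)e/l)∈ℤ^k and e':=ke/l. Let λ be a k-partition and let λ[0] be the l-partition consisting of l/k consecutive copies of λ. Fix i∈ℤ/e'ℤ and i'∈ℤ/eℤ with i'≡i (mod e'). Then the map sending an addable or removable i-node (a,b,c) of λ (residue computed with (e',v)) to the unique node (a,b,c+jk) with j∈{0,…,l/k−1} whose residue with respect to (e,s) is i' is a bijection from the addable (respectively removable) i-nodes of λ onto the addable (respectively removable) i'-nodes of λ[0], and for any two such nodes γ, δ of λ one has γ≺_v δ if and only if their images satisfy ≺_s. Consequently w_i^{(e',v)}(λ)=w_{i'}^{(e,s)}(λ[0]). -/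
private lemma stmt9_aux_eq_of_dvd (q x y d : ℤ) (hq : 0 < q) (h : x - y = q * d)
    (hx0 : 0 ≤ x) (hx : x < q) (hy0 : 0 ≤ y) (hy : y < q) : x = y := by
  rcases lt_trichotomy d 0 with h' | h' | h'
  · have h2 : q * d ≤ q * (-1) := mul_le_mul_of_nonneg_left (by omega) hq.le
    linarith
  · rw [h', mul_zero] at h; linarith
  · have h2 : q * 1 ≤ q * d := mul_le_mul_of_nonneg_left (by omega) hq.le
    rw [mul_one] at h2; linarith

private lemma stmt9_aux_mul_pos (P X : ℤ) (hP : 0 < P) : (0 < P * X ↔ 0 < X) := by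
  constructor
  · intro h; by_contra h'; push_neg at h'
    nlinarith
  · exact fun h => mul_pos hP h

private lemma stmt9_aux_mul_eq (P X : ℤ) (hP : P ≠ 0) : (P * X = 0 ↔ X = 0) := by
  simp [mul_eq_zero, hP]


/-- With `s = (0, e/l, …, (l-1)e/l)`, `v = (0, e/l, …, (k-1)e/l)`,
`e' = ke/l`, `λ[0]` the `l`-partition made of `l/k` copies of the
`k`-partition `λ`, and `i ∈ ℤ/e'ℤ`, `i' ∈ ℤ/eℤ` with `i' ≡ i (mod e')`
(both being the class of a common integer `I`): each addable or removable
`i`-node `(a,b,c)` of `λ` has a unique `j ∈ {0, …, l/k-1}` such that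
`(a,b,c+jk)` has residue `i'` w.r.t. `(e,s)`; the resulting map is a bijection
from the addable (resp. removable) `i`-nodes of `λ` onto the addable (resp.
removable) `i'`-nodes of `λ[0]`, and it preserves the order (`≺_v` versus
`≺_s`).  Consequently `w_i^{(e',v)}(λ) = w_{i'}^{(e,s)}(λ[0])`. -/
theorem stmt9 (e l k : ℕ) (he : 1 < e) (hl : 0 < l) (hk : 0 < k)
    (hkl : k ∣ l) (hle : l ∣ e)
    (s : Fin l → ℤ) (hs : ∀ c : Fin l, s c = ((c.val * (e / l) : ℕ) : ℤ))
    (v : Fin k → ℤ) (hv : ∀ c : Fin k, v c = ((c.val * (e / l) : ℕ) : ℤ))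
    (lam : Multipartition k)
    (mu : Multipartition l)
    (hmu : ∀ (c : Fin l) (a : ℕ),
      mu.part c a = lam.part ⟨c.val % k, Nat.mod_lt _ hk⟩ a)
    (I : ℤ) (i : ZMod (k * (e / l))) (i' : ZMod e)
    (hi : i = (I : ZMod (k * (e / l)))) (hi' : i' = (I : ZMod e)) :
    (∀ (a b : ℕ) (c : Fin k), IsARNode (k * (e / l)) v lam i (a, b, c) →
      ∃! j : ℕ, j < l / k ∧ res e s (a, b, klift hl c j) = i') ∧
    (∀ (a b : ℕ) (c : Fin k) (j : ℕ), j < l / k →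
      IsARNode (k * (e / l)) v lam i (a, b, c) →
      res e s (a, b, klift hl c j) = i' →
      (IsAddable lam (a, b, c) ↔ IsAddable mu (a, b, klift hl c j)) ∧
      (IsRemovable lam (a, b, c) ↔ IsRemovable mu (a, b, klift hl c j))) ∧
    (∀ η : MPNode l, IsARNode e s mu i' η →
      ∃ (a b : ℕ) (c : Fin k) (j : ℕ), j < l / k ∧
        IsARNode (k * (e / l)) v lam i (a, b, c) ∧
        η = (a, b, klift hl c j)) ∧
    (∀ (a b : ℕ) (c : Fin k) (j : ℕ) (a' b' : ℕ) (c' : Fin k) (j' : ℕ),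
      j < l / k → j' < l / k →
      IsARNode (k * (e / l)) v lam i (a, b, c) →
      IsARNode (k * (e / l)) v lam i (a', b', c') →
      res e s (a, b, klift hl c j) = i' →
      res e s (a', b', klift hl c' j') = i' →
      (nlt v (a, b, c) (a', b', c') ↔
        nlt s (a, b, klift hl c j) (a', b', klift hl c' j'))) := by
  obtain ⟨m, hm⟩ := hle
  obtain ⟨q, hq⟩ := hkl
  have hel : e / l = m := by rw [hm, Nat.mul_div_cancel_left m hl]
  have hlq : l / k = q := by rw [hq, Nat.mul_div_cancel_left q hk]
  have hm0 : 0 < m := by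
    rcases Nat.eq_zero_or_pos m with h | h
    · subst h; omega
    · exact h
  have hq0 : 0 < q := by
    rcases Nat.eq_zero_or_pos q with h | h
    · subst h; omega
    · exact h
  have hKcast : ((k * (e / l) : ℕ) : ℤ) = (k : ℤ) * (m : ℤ) := by
    rw [hel]; push_cast; ring
  have hecast : ((e : ℕ) : ℤ) = (q : ℤ) * ((k : ℤ) * (m : ℤ)) := by
    rw [hm, hq]; push_cast; ring
  have hKpos : (0 : ℤ) < (k : ℤ) * (m : ℤ) := by
    have := Nat.mul_pos hk hm0
    exact_mod_cast this
  have hqz : (0 : ℤ) < (q : ℤ) := by exact_mod_cast hq0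
  have hkz : (0 : ℤ) < (k : ℤ) := by exact_mod_cast hk
  have hresv : ∀ γ : MPNode k,
      (res (k * (e / l)) v γ = i ↔ ((k : ℤ) * (m : ℤ)) ∣ (I - content v γ)) := by
    intro γ
    rw [hi, res, ZMod.intCast_eq_intCast_iff, Int.modEq_iff_dvd, hKcast]
  have hress : ∀ η : MPNode l,
      (res e s η = i' ↔ ((e : ℕ) : ℤ) ∣ (I - content s η)) := by
    intro η
    rw [hi', res, ZMod.intCast_eq_intCast_iff, Int.modEq_iff_dvd]
  have hcv : ∀ (a b : ℕ) (c : Fin k),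
      content v ((a, b, c) : MPNode k) = (b : ℤ) - (a : ℤ) + (c.val : ℤ) * (m : ℤ) := by
    intro a b c
    simp only [content, hv, hel]
    push_cast; ring
  have hcs : ∀ (a b : ℕ) (c : Fin l),
      content s ((a, b, c) : MPNode l) = (b : ℤ) - (a : ℤ) + (c.val : ℤ) * (m : ℤ) := by
    intro a b c
    simp only [content, hs, hel]
    push_cast; ring
  have hbound : ∀ (c : Fin k) (j : ℕ), j < q → c.val + j * k < l := by
    intro c j hj
    calc c.val + j * k < k + j * k := Nat.add_lt_add_right c.isLt _
      _ = (j + 1) * k := by ring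
      _ ≤ q * k := Nat.mul_le_mul_right k hj
      _ = l := by rw [hq, mul_comm]
  have hkv : ∀ (c : Fin k) (j : ℕ), j < q → (klift hl c j).val = c.val + j * k := by
    intro c j hj
    simp [klift, Nat.mod_eq_of_lt (hbound c j hj)]
  have hcks : ∀ (a b : ℕ) (c : Fin k) (j : ℕ), j < q →
      content s ((a, b, klift hl c j) : MPNode l)
        = content v ((a, b, c) : MPNode k) + (j : ℤ) * ((k : ℤ) * (m : ℤ)) := by
    intro a b c j hj
    rw [hcs, hcv, hkv c j hj]
    push_cast; ring
  refine ⟨?_, ?_, ?_, ?_⟩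
  · -- Part 1: existence and uniqueness of j
    intro a b c hγ
    obtain ⟨U, hU⟩ := (hresv _).mp hγ.2
    have hj0c : (((U % (q : ℤ)).toNat : ℕ) : ℤ) = U % (q : ℤ) :=
      Int.toNat_of_nonneg (Int.emod_nonneg U hqz.ne')
    set j₀ : ℕ := (U % (q : ℤ)).toNat with hj0def
    have hmodlt : U % (q : ℤ) < (q : ℤ) := Int.emod_lt_of_pos U hqz
    have hj0lt : j₀ < q := by omega
    have hem : U % (q : ℤ) = U - (q : ℤ) * (U / (q : ℤ)) := Int.emod_def U (q : ℤ)
    have h3 : U - (j₀ : ℤ) = (q : ℤ) * (U / (q : ℤ)) := by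
      rw [hj0c, hem]; ring
    refine ⟨j₀, ⟨by rwa [hlq], ?_⟩, ?_⟩
    · rw [hress _, hcks a b c j₀ hj0lt, hecast]
      refine ⟨U / (q : ℤ), ?_⟩
      linear_combination hU + ((k : ℤ) * (m : ℤ)) * h3
    · rintro j₁ ⟨hj₁lt, hres₁⟩
      rw [hlq] at hj₁lt
      have h1 := (hress _).mp hres₁
      rw [hcks a b c j₁ hj₁lt, hecast] at h1
      obtain ⟨W, hW⟩ := h1
      have h2 : U - (j₁ : ℤ) = (q : ℤ) * W := by
        apply mul_left_cancel₀ hKpos.ne'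
        linear_combination hW - hU
      have h4 : (j₁ : ℤ) - (j₀ : ℤ) = (q : ℤ) * ((U / (q : ℤ)) - W) := by
        linear_combination h3 - h2
      have := stmt9_aux_eq_of_dvd (q : ℤ) (j₁ : ℤ) (j₀ : ℤ) _ hqz h4
        (by positivity) (by exact_mod_cast hj₁lt) (by positivity) (by exact_mod_cast hj0lt)
      exact_mod_cast this
  · -- Part 2: addable/removable correspondence
    intro a b c j hj _ _
    rw [hlq] at hj
    have hfin : (⟨(klift hl c j).val % k, Nat.mod_lt _ hk⟩ : Fin k) = c := by
      apply Fin.ext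
      simp only [hkv c j hj]
      rw [Nat.add_mul_mod_self_right, Nat.mod_eq_of_lt c.isLt]
    have hpart : ∀ x, mu.part (klift hl c j) x = lam.part c x := by
      intro x; rw [hmu, hfin]
    constructor
    · simp only [IsAddable, hpart]
    · simp only [IsRemovable, hpart]
  · -- Part 3: surjectivity
    rintro ⟨a, b, c'⟩ hη
    have hc'k : c'.val % k < k := Nat.mod_lt _ hk
    refine ⟨a, b, ⟨c'.val % k, hc'k⟩, c'.val / k, ?_, ⟨?_, ?_⟩, ?_⟩
    · rw [hlq]
      have h1 : c'.val < q * k := by rw [mul_comm, ← hq]; exact c'.isLt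
      exact (Nat.div_lt_iff_lt_mul hk).mpr h1
    · have hpart : ∀ x, mu.part c' x = lam.part ⟨c'.val % k, hc'k⟩ x := by
        intro x; rw [hmu]
      rcases hη.1 with h | h
      · left
        obtain ⟨h1, h2⟩ := h
        exact ⟨by simpa [hpart] using h1, by simpa [hpart] using h2⟩
      · right
        obtain ⟨h1, h2⟩ := h
        exact ⟨by simpa [hpart] using h1, by simpa [hpart] using h2⟩
    · rw [hresv]
      have h4 := (hress _).mp hη.2
      have hval : c'.val = c'.val % k + (c'.val / k) * k := (Nat.mod_add_div' c'.val k).symm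
      have h5 : content s ((a, b, c') : MPNode l)
          = content v ((a, b, (⟨c'.val % k, hc'k⟩ : Fin k)) : MPNode k)
            + ((c'.val / k : ℕ) : ℤ) * ((k : ℤ) * (m : ℤ)) := by
        rw [hcs, hcv]
        nth_rewrite 1 [hval]
        push_cast; ring
      rw [hecast, h5] at h4
      obtain ⟨W, hW⟩ := h4
      exact ⟨(q : ℤ) * W + ((c'.val / k : ℕ) : ℤ), by linear_combination hW⟩
    · have hjlt : c'.val / k < q := by
        have h1 : c'.val < q * k := by rw [mul_comm, ← hq]; exact c'.isLt
        exact (Nat.div_lt_iff_lt_mul hk).mpr h1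
      have : klift hl (⟨c'.val % k, hc'k⟩ : Fin k) (c'.val / k) = c' := by
        apply Fin.ext
        rw [hkv _ _ hjlt]
        simp only []
        rw [Nat.mod_add_div']
      rw [this]
  · -- Part 4: order preservation
    intro a b c j a' b' c' j' hjq hj'q hγ hδ hr1 hr2
    rw [hlq] at hjq hj'q
    obtain ⟨U, hU⟩ := (hresv _).mp hγ.2
    obtain ⟨V, hV⟩ := (hresv _).mp hδ.2
    have h1 := (hress _).mp hr1
    have h2 := (hress _).mp hr2
    rw [hecast, hcks a b c j hjq] at h1
    rw [hecast, hcks a' b' c' j' hj'q] at h2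
    obtain ⟨W1, hW1⟩ := h1
    obtain ⟨W2, hW2⟩ := h2
    have hje : (j : ℤ) = U - (q : ℤ) * W1 := by
      apply mul_left_cancel₀ hKpos.ne'
      linear_combination hU - hW1
    have hj'e : (j' : ℤ) = V - (q : ℤ) * W2 := by
      apply mul_left_cancel₀ hKpos.ne'
      linear_combination hV - hW2
    set C := content v ((a, b, c) : MPNode k) with hCdef
    set D := content v ((a', b', c') : MPNode k) with hDdef
    have hDC : D - C = ((k : ℤ) * (m : ℤ)) * (U - V) := by linear_combination hU - hV
    have hDC2 : (D + (j' : ℤ) * ((k : ℤ) * (m : ℤ))) - (C + (j : ℤ) * ((k : ℤ) * (m : ℤ)))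
        = ((q : ℤ) * ((k : ℤ) * (m : ℤ))) * (W1 - W2) := by linear_combination hW1 - hW2
    have hlt1 : (C < D) ↔ V < U := by
      rw [← sub_pos, hDC, stmt9_aux_mul_pos _ _ hKpos, sub_pos]
    have heq1 : (C = D) ↔ U = V := by
      constructor
      · intro h
        have h' : ((k : ℤ) * (m : ℤ)) * (U - V) = 0 := by rw [← hDC, h]; ring
        have := (stmt9_aux_mul_eq _ _ hKpos.ne').mp h'
        linarith
      · intro h
        have : D - C = 0 := by rw [hDC, h]; ring
        linarith
    have hQKpos : (0 : ℤ) < (q : ℤ) * ((k : ℤ) * (m : ℤ)) := by positivity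
    have hlt2 : (C + (j : ℤ) * ((k : ℤ) * (m : ℤ)) < D + (j' : ℤ) * ((k : ℤ) * (m : ℤ)))
        ↔ W2 < W1 := by
      rw [← sub_pos, hDC2, stmt9_aux_mul_pos _ _ hQKpos, sub_pos]
    have heq2 : (C + (j : ℤ) * ((k : ℤ) * (m : ℤ)) = D + (j' : ℤ) * ((k : ℤ) * (m : ℤ)))
        ↔ W1 = W2 := by
      constructor
      · intro h
        have h' : ((q : ℤ) * ((k : ℤ) * (m : ℤ))) * (W1 - W2) = 0 := by
          rw [← hDC2, h]; ring
        have := (stmt9_aux_mul_eq _ _ hQKpos.ne').mp h'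
        linarith
      · intro h
        have h' : (D + (j' : ℤ) * ((k : ℤ) * (m : ℤ)))
            - (C + (j : ℤ) * ((k : ℤ) * (m : ℤ))) = 0 := by rw [hDC2, h]; ring
        linarith
    simp only [nlt, hcks a b c j hjq, hcks a' b' c' j' hj'q, Fin.lt_def,
      hkv c j hjq, hkv c' j' hj'q, ← hCdef, ← hDdef]
    rw [hlt1, heq1, hlt2, heq2]
    clear hlt1 heq1 hlt2 heq2 hDC hDC2 hU hV hW1 hW2 hresv hress hcv hcs hbound hkv hcks
    clear hγ hδ hr1 hr2 hmu hs hv hi hi' hCdef hDdef C D i i' lam mu s v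
    -- now a purely arithmetic statement
    have hjz : (j : ℤ) < q := by exact_mod_cast hjq
    have hj'z : (j' : ℤ) < q := by exact_mod_cast hj'q
    have hj0 : (0 : ℤ) ≤ (j : ℤ) := by positivity
    have hj'0 : (0 : ℤ) ≤ (j' : ℤ) := by positivity
    have hcz : ((c.val : ℕ) : ℤ) < k := by exact_mod_cast c.isLt
    have hc'z : ((c'.val : ℕ) : ℤ) < k := by exact_mod_cast c'.isLt
    have hc0 : (0 : ℤ) ≤ ((c.val : ℕ) : ℤ) := by positivity
    have hc'0 : (0 : ℤ) ≤ ((c'.val : ℕ) : ℤ) := by positivity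
    zify
    rcases lt_trichotomy W1 W2 with hW | hW | hW
    · -- both sides false
      have hqW : (q : ℤ) * (W1 + 1) ≤ (q : ℤ) * W2 :=
        mul_le_mul_of_nonneg_left (by omega) hqz.le
      have hUV : U < V := by linarith [hje, hj'e]
      refine iff_of_false ?_ ?_
      · rintro (h | ⟨h, -⟩) <;> linarith
      · rintro (h | ⟨h, -⟩) <;> linarith
    · -- W1 = W2
      subst hW
      rcases lt_trichotomy U V with hUV | hUV | hUV
      · -- both sides false
        have hjj : (j : ℤ) + 1 ≤ (j' : ℤ) := by linarith
        have hmul : ((j : ℤ) + 1) * (k : ℤ) ≤ (j' : ℤ) * (k : ℤ) :=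
          mul_le_mul_of_nonneg_right hjj hkz.le
        refine iff_of_false ?_ ?_
        · rintro (h | ⟨h, -⟩) <;> linarith
        · rintro (h | ⟨-, h2⟩)
          · linarith
          · linarith
      · -- U = V
        have hjj : (j : ℤ) = (j' : ℤ) := by linarith
        have hjk : (j : ℤ) * (k : ℤ) = (j' : ℤ) * (k : ℤ) := by rw [hjj]
        constructor
        · rintro (h | ⟨-, hc⟩)
          · linarith
          · refine Or.inr ⟨rfl, ?_⟩
            linarith
        · rintro (h | ⟨-, hc⟩)
          · linarith
          · refine Or.inr ⟨by linarith, ?_⟩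
            linarith
      · -- V < U: both sides true
        have hjj : (j' : ℤ) + 1 ≤ (j : ℤ) := by linarith
        have hmul : ((j' : ℤ) + 1) * (k : ℤ) ≤ (j : ℤ) * (k : ℤ) :=
          mul_le_mul_of_nonneg_right hjj hkz.le
        refine iff_of_true (Or.inl hUV) (Or.inr ⟨rfl, ?_⟩)
        linarith
    · -- W2 < W1: both sides true
      have hqW : (q : ℤ) * (W2 + 1) ≤ (q : ℤ) * W1 :=
        mul_le_mul_of_nonneg_left (by omega) hqz.le
      have hVU : V < U := by linarith [hje, hj'e]
      exact iff_of_true (Or.inl hVU) (Or.inl hW)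
end

section
/- Let e>1, l≥1 and s=(s_1,…,s_l)∈ℤ^l, and set τ.s:=(s_2,…,s_l,s_1+e). If (i_1,…,i_n)∈(ℤ/eℤ)^n is a sequence with f̃_{i_1}^{(e,s)}⋯f̃_{i_n}^{(e,s)}∅=(λ^1,…,λ^l), then f̃_{i_1}^{(e,τ.s)}⋯f̃_{i_n}^{(e,τ.s)}∅ is defined and equals (λ^2,…,λ^l,λ^1); that is, the crystal isomorphism Ψ^e_{s→τ.s} is given on Uglov l-partitions by the cyclic shift (λ^1,…,λ^l)↦(λ^2,…,λ^l,λ^1). -/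
namespace Stmt13Aux

variable {e l : ℕ}

lemma comp_inj (hl : 0 < l) {c c' : Fin l}
    (h : (c.val + 1) % l = (c'.val + 1) % l) : c = c' := by
  have hc := c.isLt; have hc' := c'.isLt
  apply Fin.ext
  by_cases h1 : c.val + 1 < l
  · rw [Nat.mod_eq_of_lt h1] at h
    by_cases h2 : c'.val + 1 < l
    · rw [Nat.mod_eq_of_lt h2] at h; omega
    · rw [show c'.val + 1 = l by omega, Nat.mod_self] at h; omega
  · rw [show c.val + 1 = l by omega, Nat.mod_self] at h
    by_cases h2 : c'.val + 1 < l
    · rw [Nat.mod_eq_of_lt h2] at h; omega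
    · omega

lemma cshift_inj (hl : 0 < l) : Function.Injective (cshift hl) := by
  rintro ⟨a, b, c⟩ ⟨a', b', c'⟩ h
  simp only [cshift, Prod.mk.injEq] at h
  obtain ⟨h1, h2, h3⟩ := h
  exact Prod.ext h1 (Prod.ext h2 (comp_inj hl (congrArg Fin.val h3)))

lemma cshift_surj (hl : 0 < l) : Function.Surjective (cshift hl) := by
  rintro ⟨a, b, c⟩
  have hσ : Function.Surjective
      (fun c : Fin l => (⟨(c.val + 1) % l, Nat.mod_lt _ hl⟩ : Fin l)) :=
    Finite.surjective_of_injective (fun x y h => comp_inj hl (congrArg Fin.val h))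
  obtain ⟨c', hc'⟩ := hσ c
  exact ⟨(a, b, c'), by simp [cshift, hc']⟩

lemma content_cshift (hl : 0 < l) (s s' : Fin l → ℤ)
    (hs' : ∀ c : Fin l, s' c =
      if h : c.val + 1 < l then s ⟨c.val + 1, h⟩ else s ⟨0, hl⟩ + e)
    (γ : MPNode l) :
    content s (cshift hl γ) = content s' γ - (if γ.2.2.val + 1 < l then 0 else (e : ℤ)) := by
  obtain ⟨a, b, c⟩ := γ
  simp only [content, cshift]
  rw [hs' c]
  by_cases h : c.val + 1 < l
  · rw [dif_pos h, if_pos h,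
      show (⟨(c.val + 1) % l, Nat.mod_lt _ hl⟩ : Fin l) = ⟨c.val + 1, h⟩ from
        Fin.ext (Nat.mod_eq_of_lt h)]
    ring
  · rw [dif_neg h, if_neg h,
      show (⟨(c.val + 1) % l, Nat.mod_lt _ hl⟩ : Fin l) = ⟨0, hl⟩ from
        Fin.ext (by
          show (c.val + 1) % l = 0
          rw [show c.val + 1 = l from by have := c.isLt; omega, Nat.mod_self])]
    ring

lemma res_cshift (hl : 0 < l) (s s' : Fin l → ℤ)
    (hs' : ∀ c : Fin l, s' c =
      if h : c.val + 1 < l then s ⟨c.val + 1, h⟩ else s ⟨0, hl⟩ + e)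
    (γ : MPNode l) : res e s (cshift hl γ) = res e s' γ := by
  simp only [res, content_cshift hl s s' hs' γ]
  by_cases h : γ.2.2.val + 1 < l
  · rw [if_pos h, sub_zero]
  · rw [if_neg h]
    push_cast
    rw [ZMod.natCast_self, sub_zero]

lemma dvd_of_res {s' : Fin l → ℤ} {i : ZMod e} {α β : MPNode l}
    (h1 : res e s' α = i) (h2 : res e s' β = i) :
    (e : ℤ) ∣ content s' β - content s' α := by
  have h : ((content s' α : ℤ) : ZMod e) = ((content s' β : ℤ) : ZMod e) := h1.trans h2.symm
  exact Int.ModEq.dvd ((ZMod.intCast_eq_intCast_iff _ _ _).mp h)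

lemma lt_iff_aux {em x k m : ℤ} (he : 0 < em) :
    x + em * m < x + em * k ↔ m < k := by
  constructor
  · intro h
    by_contra h'
    push_neg at h'
    have := mul_le_mul_of_nonneg_left h' (le_of_lt he)
    linarith
  · intro h
    have := (mul_lt_mul_iff_right₀ he).mpr h
    linarith

lemma eq_iff_aux {em x k m : ℤ} (he : 0 < em) :
    x + em * m = x + em * k ↔ m = k := by
  constructor
  · intro h
    exact mul_left_cancel₀ (ne_of_gt he) (by linarith)
  · rintro rfl; rfl

lemma nlt_cshift (he : 0 < e) (hl : 0 < l) (s s' : Fin l → ℤ)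
    (hs' : ∀ c : Fin l, s' c =
      if h : c.val + 1 < l then s ⟨c.val + 1, h⟩ else s ⟨0, hl⟩ + e)
    {γ δ : MPNode l} (hd : (e : ℤ) ∣ content s' δ - content s' γ) :
    nlt s (cshift hl γ) (cshift hl δ) ↔ nlt s' γ δ := by
  obtain ⟨k, hk⟩ := hd
  set x := content s' γ with hx
  set y := content s' δ with hy
  have hk' : y = x + (e : ℤ) * k := by linarith
  have hepos : (0 : ℤ) < e := by exact_mod_cast he
  have g0 : x < y ↔ 0 < k := by
    rw [hk']; simpa using lt_iff_aux (x := x) (m := 0) (k := k) hepos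
  have g1 : x = y ↔ (0 : ℤ) = k := by
    rw [hk']; simpa using eq_iff_aux (x := x) (m := 0) (k := k) hepos
  have g2 : x + e < y ↔ 1 < k := by
    rw [hk']; simpa using lt_iff_aux (x := x) (m := 1) (k := k) hepos
  have g3 : x + e = y ↔ (1 : ℤ) = k := by
    rw [hk']; simpa using eq_iff_aux (x := x) (m := 1) (k := k) hepos
  have g4 : x - e < y ↔ -1 < k := by
    rw [hk']
    have := lt_iff_aux (x := x) (m := -1) (k := k) hepos
    simpa [mul_neg, mul_one, ← sub_eq_add_neg] using this
  have g5 : x - e = y ↔ (-1 : ℤ) = k := by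
    rw [hk']
    have := eq_iff_aux (x := x) (m := -1) (k := k) hepos
    simpa [mul_neg, mul_one, ← sub_eq_add_neg] using this
  have hcγ := content_cshift hl s s' hs' γ
  have hcδ := content_cshift hl s s' hs' δ
  rw [← hx] at hcγ
  rw [← hy] at hcδ
  have hc1 := γ.2.2.isLt
  have hc2 := δ.2.2.isLt
  simp only [nlt]
  rw [hcγ, hcδ]
  simp only [cshift, Fin.lt_def]
  by_cases h1 : γ.2.2.val + 1 < l <;> by_cases h2 : δ.2.2.val + 1 < l
  · rw [if_pos h1, if_pos h2, Nat.mod_eq_of_lt h1, Nat.mod_eq_of_lt h2]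
    omega
  · rw [if_pos h1, if_neg h2, Nat.mod_eq_of_lt h1,
      show (δ.2.2.val + 1) % l = 0 by rw [show δ.2.2.val + 1 = l by omega, Nat.mod_self]]
    omega
  · rw [if_neg h1, if_pos h2, Nat.mod_eq_of_lt h2,
      show (γ.2.2.val + 1) % l = 0 by rw [show γ.2.2.val + 1 = l by omega, Nat.mod_self]]
    omega
  · rw [if_neg h1, if_neg h2,
      show (γ.2.2.val + 1) % l = 0 by rw [show γ.2.2.val + 1 = l by omega, Nat.mod_self],
      show (δ.2.2.val + 1) % l = 0 by rw [show δ.2.2.val + 1 = l by omega, Nat.mod_self]]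
    omega

lemma nle_cshift (he : 0 < e) (hl : 0 < l) (s s' : Fin l → ℤ)
    (hs' : ∀ c : Fin l, s' c =
      if h : c.val + 1 < l then s ⟨c.val + 1, h⟩ else s ⟨0, hl⟩ + e)
    {γ δ : MPNode l} (hd : (e : ℤ) ∣ content s' δ - content s' γ) :
    nle s (cshift hl γ) (cshift hl δ) ↔ nle s' γ δ :=
  or_congr (nlt_cshift he hl s s' hs' hd)
    ⟨fun h => cshift_inj hl h, fun h => congrArg _ h⟩

/-- The cyclic shift of a multipartition. -/
def shiftMP (hl : 0 < l) (lam : Multipartition l) : Multipartition l :=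
  ⟨fun c a => lam.part ⟨(c.val + 1) % l, Nat.mod_lt _ hl⟩ a,
   fun c => lam.antitone' _, fun c => lam.support_finite' _⟩

lemma isAddable_shift (hl : 0 < l) (lam : Multipartition l) (γ : MPNode l) :
    IsAddable (shiftMP hl lam) γ ↔ IsAddable lam (cshift hl γ) := Iff.rfl

lemma isRemovable_shift (hl : 0 < l) (lam : Multipartition l) (γ : MPNode l) :
    IsRemovable (shiftMP hl lam) γ ↔ IsRemovable lam (cshift hl γ) := Iff.rfl

lemma image_set (he : 0 < e) (hl : 0 < l) (s s' : Fin l → ℤ)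
    (hs' : ∀ c : Fin l, s' c =
      if h : c.val + 1 < l then s ⟨c.val + 1, h⟩ else s ⟨0, hl⟩ + e)
    (i : ZMod e) (P Q : MPNode l → Prop) (hPQ : ∀ η, P η ↔ Q (cshift hl η))
    {δ γ : MPNode l} (hγ : res e s' γ = i) (hδ : res e s' δ = i) :
    cshift hl '' {η | P η ∧ res e s' η = i ∧ nle s' δ η ∧ nle s' η γ} =
      {η | Q η ∧ res e s η = i ∧ nle s (cshift hl δ) η ∧ nle s η (cshift hl γ)} := by
  ext η'
  constructor
  · rintro ⟨η, ⟨hP, hres, h1, h2⟩, rfl⟩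
    refine ⟨(hPQ η).mp hP, by rw [res_cshift hl s s' hs']; exact hres, ?_, ?_⟩
    · exact (nle_cshift he hl s s' hs' (dvd_of_res hδ hres)).mpr h1
    · exact (nle_cshift he hl s s' hs' (dvd_of_res hres hγ)).mpr h2
  · rintro ⟨hQ, hres, h1, h2⟩
    obtain ⟨η, rfl⟩ := cshift_surj hl η'
    have hres' : res e s' η = i := by rw [← res_cshift hl s s' hs']; exact hres
    exact ⟨η, ⟨(hPQ η).mpr hQ, hres',
      (nle_cshift he hl s s' hs' (dvd_of_res hδ hres')).mp h1,
      (nle_cshift he hl s s' hs' (dvd_of_res hres' hγ)).mp h2⟩, rfl⟩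

lemma ncard_set (he : 0 < e) (hl : 0 < l) (s s' : Fin l → ℤ)
    (hs' : ∀ c : Fin l, s' c =
      if h : c.val + 1 < l then s ⟨c.val + 1, h⟩ else s ⟨0, hl⟩ + e)
    (i : ZMod e) (P Q : MPNode l → Prop) (hPQ : ∀ η, P η ↔ Q (cshift hl η))
    {δ γ : MPNode l} (hγ : res e s' γ = i) (hδ : res e s' δ = i) :
    {η | P η ∧ res e s' η = i ∧ nle s' δ η ∧ nle s' η γ}.ncard =
      {η | Q η ∧ res e s η = i ∧ nle s (cshift hl δ) η ∧ nle s η (cshift hl γ)}.ncard := by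
  rw [← image_set he hl s s' hs' i P Q hPQ hγ hδ,
    Set.ncard_image_of_injective _ (cshift_inj hl)]

lemma survivingA_shift (he : 0 < e) (hl : 0 < l) (s s' : Fin l → ℤ)
    (hs' : ∀ c : Fin l, s' c =
      if h : c.val + 1 < l then s ⟨c.val + 1, h⟩ else s ⟨0, hl⟩ + e)
    (lam : Multipartition l) (i : ZMod e) (γ : MPNode l) :
    SurvivingA e s' (shiftMP hl lam) i γ ↔ SurvivingA e s lam i (cshift hl γ) := by
  unfold SurvivingA
  have hres := res_cshift (e := e) hl s s' hs' γ
  constructor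
  · rintro ⟨hA, hrγ, hcnt⟩
    refine ⟨hA, by rw [hres]; exact hrγ, ?_⟩
    intro δ' hδ' hle'
    obtain ⟨δ, rfl⟩ := cshift_surj hl δ'
    have hrδ : res e s' δ = i := by
      rw [← res_cshift (e := e) hl s s' hs' δ]; exact hδ'.2
    have hAR : IsARNode e s' (shiftMP hl lam) i δ := ⟨hδ'.1, hrδ⟩
    have hle : nle s' δ γ :=
      (nle_cshift he hl s s' hs' (dvd_of_res hrδ hrγ)).mp hle'
    have h := hcnt δ hAR hle
    rwa [ncard_set he hl s s' hs' i (fun η => IsRemovable (shiftMP hl lam) η)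
        (fun η => IsRemovable lam η) (fun η => Iff.rfl) hrγ hrδ,
      ncard_set he hl s s' hs' i (fun η => IsAddable (shiftMP hl lam) η)
        (fun η => IsAddable lam η) (fun η => Iff.rfl) hrγ hrδ] at h
  · rintro ⟨hA, hrγ', hcnt⟩
    have hrγ : res e s' γ = i := by rw [← hres]; exact hrγ'
    refine ⟨hA, hrγ, ?_⟩
    intro δ hδAR hle
    have hrδ : res e s' δ = i := hδAR.2
    have hAR : IsARNode e s lam i (cshift hl δ) :=
      ⟨hδAR.1, by rw [res_cshift (e := e) hl s s' hs' δ]; exact hrδ⟩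
    have hle' : nle s (cshift hl δ) (cshift hl γ) :=
      (nle_cshift he hl s s' hs' (dvd_of_res hrδ hrγ)).mpr hle
    have h := hcnt (cshift hl δ) hAR hle'
    rwa [ncard_set he hl s s' hs' i (fun η => IsRemovable (shiftMP hl lam) η)
        (fun η => IsRemovable lam η) (fun η => Iff.rfl) hrγ hrδ,
      ncard_set he hl s s' hs' i (fun η => IsAddable (shiftMP hl lam) η)
        (fun η => IsAddable lam η) (fun η => Iff.rfl) hrγ hrδ]

lemma goodAddable_shift (he : 0 < e) (hl : 0 < l) (s s' : Fin l → ℤ)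
    (hs' : ∀ c : Fin l, s' c =
      if h : c.val + 1 < l then s ⟨c.val + 1, h⟩ else s ⟨0, hl⟩ + e)
    (lam : Multipartition l) (i : ZMod e) (γ : MPNode l) :
    GoodAddable e s' (shiftMP hl lam) i γ ↔ GoodAddable e s lam i (cshift hl γ) := by
  unfold GoodAddable
  constructor
  · rintro ⟨hS, hmax⟩
    have hrγ : res e s' γ = i := hS.2.1
    refine ⟨(survivingA_shift he hl s s' hs' lam i γ).mp hS, ?_⟩
    intro δ' hδ'
    obtain ⟨δ, rfl⟩ := cshift_surj hl δ'
    have hSδ := (survivingA_shift he hl s s' hs' lam i δ).mpr hδ'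
    exact (nle_cshift he hl s s' hs' (dvd_of_res hSδ.2.1 hrγ)).mpr (hmax δ hSδ)
  · rintro ⟨hS, hmax⟩
    have hS' := (survivingA_shift he hl s s' hs' lam i γ).mpr hS
    refine ⟨hS', ?_⟩
    intro δ hδ
    have h := hmax (cshift hl δ) ((survivingA_shift he hl s s' hs' lam i δ).mp hδ)
    exact (nle_cshift he hl s s' hs' (dvd_of_res hδ.2.1 hS'.2.1)).mp h

lemma frel_shift (he : 0 < e) (hl : 0 < l) (s s' : Fin l → ℤ)
    (hs' : ∀ c : Fin l, s' c =
      if h : c.val + 1 < l then s ⟨c.val + 1, h⟩ else s ⟨0, hl⟩ + e)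
    {i : ZMod e} {lam nu : Multipartition l} (h : FRel e s i lam nu) :
    FRel e s' i (shiftMP hl lam) (shiftMP hl nu) := by
  obtain ⟨γ0, hgood, hadd⟩ := h
  obtain ⟨γ, rfl⟩ := cshift_surj hl γ0
  refine ⟨γ, (goodAddable_shift he hl s s' hs' lam i γ).mpr hgood, ?_⟩
  intro c a
  have h := hadd ⟨(c.val + 1) % l, Nat.mod_lt _ hl⟩ a
  have hcomp : (⟨(c.val + 1) % l, Nat.mod_lt _ hl⟩ : Fin l) = (cshift hl γ).2.2 ↔
      c = γ.2.2 := by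
    constructor
    · intro hh; exact comp_inj hl (congrArg Fin.val hh)
    · rintro rfl; rfl
  show nu.part ⟨(c.val + 1) % l, Nat.mod_lt _ hl⟩ a = _
  rw [h]
  exact if_congr (and_congr hcomp Iff.rfl) rfl rfl

lemma fseq_shift (he : 0 < e) (hl : 0 < l) (s s' : Fin l → ℤ)
    (hs' : ∀ c : Fin l, s' c =
      if h : c.val + 1 < l then s ⟨c.val + 1, h⟩ else s ⟨0, hl⟩ + e) :
    ∀ (is : List (ZMod e)) {lam nu : Multipartition l},
      FSeq e s is lam nu → FSeq e s' is (shiftMP hl lam) (shiftMP hl nu)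
  | [], lam, nu, h => congrArg (shiftMP hl) h
  | i :: is, lam, nu, h => by
    obtain ⟨ν, h1, h2⟩ := h
    exact ⟨shiftMP hl ν, fseq_shift he hl s s' hs' is h1, frel_shift he hl s s' hs' h2⟩

lemma mp_ext {p q : Multipartition l} (h : ∀ c a, p.part c a = q.part c a) : p = q := by
  obtain ⟨p1, p2, p3⟩ := p
  obtain ⟨q1, q2, q3⟩ := q
  have : p1 = q1 := by funext c a; exact h c a
  subst this
  rfl

end Stmt13Aux
/-- The crystal isomorphism `Ψ^e_{s → τ.s}`: if the sequence `(i₁, …, iₙ)`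
produces `(λ¹, …, λˡ)` from the empty multipartition for the multicharge `s`,
then the same sequence for `τ.s = (s₂, …, s_l, s₁ + e)` is defined and
produces the cyclic shift `(λ², …, λˡ, λ¹)`. -/
theorem stmt13 (e l : ℕ) (he : 1 < e) (hl : 0 < l)
    (s s' : Fin l → ℤ)
    (hs' : ∀ c : Fin l, s' c =
      if h : c.val + 1 < l then s ⟨c.val + 1, h⟩ else s ⟨0, hl⟩ + e)
    (lam : Multipartition l) (is : List (ZMod e))
    (hseq : FSeq e s is (Multipartition.empty l) lam)
    (mu : Multipartition l)
    (hmu : ∀ (c : Fin l) (a : ℕ),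
      mu.part c a = lam.part ⟨(c.val + 1) % l, Nat.mod_lt _ hl⟩ a) :
    FSeq e s' is (Multipartition.empty l) mu := by
  have he0 : 0 < e := by omega
  have h := Stmt13Aux.fseq_shift he0 hl s s' hs' is hseq
  rw [show Stmt13Aux.shiftMP hl (Multipartition.empty l) = Multipartition.empty l from
    Stmt13Aux.mp_ext (fun _ _ => rfl)] at h
  rwa [show mu = Stmt13Aux.shiftMP hl lam from Stmt13Aux.mp_ext (fun c a => hmu c a)]
end

section
/- Let e>1 be even, l=2, N a nonnegative integer, s=(0,e/2+Ne) and s''=(Ne,e/2). Let (λ^1,λ^2) be a bipartition of n and let (i_1,…,i_n)∈(ℤ/eℤ)^n be a sequence with f̃_{i_1}^{(e,s)}⋯f̃_{i_n}^{(e,s)}∅=(λ^1,λ^2). Then f̃_{i_1+e/2}^{(e,s)}⋯f̃_{i_n+e/2}^{(e,s)}∅=(λ^1,λ^2) if and only if f̃_{i_1}^{(e,s'')}⋯f̃_{i_n}^{(e,s'')}∅=(λ^2,λ^1). (Equivalently, (λ^1,λ^2)∈Φ_{e,s}(n) is a divided bipartition for s if and only if the crystal isomorphism Ψ^e_{s→s''}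 sends (λ^1,λ^2) to (λ^2,λ^1).) -/
section Aux

/-- Swap of the two components of `Fin 2`. -/
def oswap : Fin 2 → Fin 2 := fun c => ⟨1 - c.val, by omega⟩

@[simp] lemma oswap_oswap (c : Fin 2) : oswap (oswap c) = c := by
  fin_cases c <;> rfl

lemma oswap_zero : oswap 0 = 1 := rfl
lemma oswap_one : oswap 1 = 0 := rfl

lemma oswap_inj : Function.Injective oswap :=
  Function.LeftInverse.injective oswap_oswap

/-- Swap of the two components of a node. -/
def gnode : MPNode 2 → MPNode 2 := fun γ => (γ.1, γ.2.1, oswap γ.2.2)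

@[simp] lemma gnode_gnode (γ : MPNode 2) : gnode (gnode γ) = γ := by
  obtain ⟨a, b, c⟩ := γ; simp [gnode]

lemma gnode_inj : Function.Injective gnode :=
  Function.LeftInverse.injective gnode_gnode

/-- Swap of the two components of a bipartition. -/
def mswap (lam : Multipartition 2) : Multipartition 2 :=
  ⟨fun c => lam.part (oswap c), fun c => lam.antitone' _, fun c => lam.support_finite' _⟩

lemma mpart_ext {l : ℕ} {lam mu : Multipartition l} (h : lam.part = mu.part) :
    lam = mu := by
  cases lam; cases mu; cases h; rfl

@[simp] lemma mswap_part (lam : Multipartition 2) (c : Fin 2) :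
    (mswap lam).part c = lam.part (oswap c) := rfl

@[simp] lemma mswap_mswap (lam : Multipartition 2) : mswap (mswap lam) = lam := by
  apply mpart_ext; funext c; simp

@[simp] lemma mswap_empty : mswap (Multipartition.empty 2) = Multipartition.empty 2 := by
  apply mpart_ext; rfl

end Aux
section Main

variable {e N : ℕ} {s s'' : Fin 2 → ℤ}

lemma fin2cases (c : Fin 2) : c = 0 ∨ c = 1 := by omega

lemma content_g0 (hs0 : s 0 = 0) (hs''1 : s'' 1 = ((e / 2 : ℕ) : ℤ)) (a b : ℕ) :
    content s'' (gnode (a, b, 0)) = content s (a, b, 0) + ((e / 2 : ℕ) : ℤ) := by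
  simp [content, gnode, oswap_zero, hs0, hs''1]

lemma content_g1 (hs1 : s 1 = ((e / 2 + N * e : ℕ) : ℤ))
    (hs''0 : s'' 0 = ((N * e : ℕ) : ℤ)) (a b : ℕ) :
    content s'' (gnode (a, b, 1)) = content s (a, b, 1) - ((e / 2 : ℕ) : ℤ) := by
  simp [content, gnode, oswap_one, hs1, hs''0]
  push_cast
  ring

lemma two_half_int (heven : 2 ∣ e) : ((e / 2 : ℕ) : ℤ) + ((e / 2 : ℕ) : ℤ) = (e : ℤ) := by
  have : e / 2 + e / 2 = e := by omega
  exact_mod_cast congrArg (fun n : ℕ => (n : ℤ)) this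

lemma half_add_half (heven : 2 ∣ e) :
    ((e / 2 : ℕ) : ZMod e) + ((e / 2 : ℕ) : ZMod e) = 0 := by
  have h : ((e / 2 + e / 2 : ℕ) : ZMod e) = ((e : ℕ) : ZMod e) := by
    congr 1; omega
  rw [Nat.cast_add] at h
  rw [h, ZMod.natCast_self]

lemma res_g (heven : 2 ∣ e) (hs0 : s 0 = 0) (hs1 : s 1 = ((e / 2 + N * e : ℕ) : ℤ))
    (hs''0 : s'' 0 = ((N * e : ℕ) : ℤ)) (hs''1 : s'' 1 = ((e / 2 : ℕ) : ℤ))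
    (γ : MPNode 2) :
    res e s'' (gnode γ) = res e s γ + ((e / 2 : ℕ) : ZMod e) := by
  obtain ⟨a, b, c⟩ := γ
  rcases fin2cases c with rfl | rfl
  · rw [res, res, content_g0 hs0 hs''1, Int.cast_add, Int.cast_natCast]
  · rw [res, res, content_g1 (N := N) hs1 hs''0, Int.cast_sub, Int.cast_natCast]
    have := half_add_half (e := e) heven
    linear_combination -this

end Main
section Main2

variable {e N : ℕ} {s s'' : Fin 2 → ℤ}

lemma dvd_of_res_eq {l : ℕ} {t : Fin l → ℤ} {γ δ : MPNode l}
    (h : res e t γ = res e t δ) : (e : ℤ) ∣ content t γ - content t δ := by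
  have h2 : content t γ ≡ content t δ [ZMOD (e : ℤ)] :=
    (ZMod.intCast_eq_intCast_iff' _ _ _).1 h
  exact dvd_sub_comm.mp (Int.ModEq.dvd h2)

end Main2
section Main3

variable {e N : ℕ} {s s'' : Fin 2 → ℤ}

lemma csw0 (hs0 : s 0 = 0) (hs''1 : s'' 1 = ((e / 2 : ℕ) : ℤ)) (a b : ℕ) :
    content s'' (a, b, 1) = content s (a, b, 0) + ((e / 2 : ℕ) : ℤ) := by
  simp [content, hs0, hs''1]

lemma csw1 (hs1 : s 1 = ((e / 2 + N * e : ℕ) : ℤ))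
    (hs''0 : s'' 0 = ((N * e : ℕ) : ℤ)) (a b : ℕ) :
    content s'' (a, b, 0) = content s (a, b, 1) - ((e / 2 : ℕ) : ℤ) := by
  simp [content, hs1, hs''0]; push_cast; ring

lemma nlt_g (he : 1 < e) (heven : 2 ∣ e)
    (hs0 : s 0 = 0) (hs1 : s 1 = ((e / 2 + N * e : ℕ) : ℤ))
    (hs''0 : s'' 0 = ((N * e : ℕ) : ℤ)) (hs''1 : s'' 1 = ((e / 2 : ℕ) : ℤ))
    {γ δ : MPNode 2} (hres : res e s γ = res e s δ) :
    nlt s'' (gnode γ) (gnode δ) ↔ nlt s γ δ := by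
  have hd := dvd_of_res_eq hres
  have h2 := two_half_int (e := e) heven
  have hepos : (0 : ℤ) < (e : ℤ) := by exact_mod_cast Nat.pos_of_ne_zero (by omega)
  have f00 : ¬ ((0 : Fin 2) < 0) := by decide
  have f11 : ¬ ((1 : Fin 2) < 1) := by decide
  have f01 : (0 : Fin 2) < 1 := by decide
  have f10 : ¬ ((1 : Fin 2) < 0) := by decide
  obtain ⟨a, b, c⟩ := γ
  obtain ⟨a', b', c'⟩ := δ
  rcases fin2cases c with rfl | rfl <;> rcases fin2cases c' with rfl | rfl <;>
    simp only [nlt, gnode, oswap_zero, oswap_one] <;>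
    simp only [f00, f11, f01, f10, and_false, and_true, or_false, iff_true,
      false_and, or_true, eq_self_iff_true]
  · rw [csw0 hs0 hs''1, csw0 hs0 hs''1]
    omega
  · rw [csw0 hs0 hs''1, csw1 (N := N) hs1 hs''0]
    constructor
    · rintro (H | H) <;> omega
    · intro H
      have hle : (e : ℤ) ≤ content s (a', b', 1) - content s (a, b, 0) :=
        Int.le_of_dvd (by omega) (dvd_sub_comm.mp hd)
      omega
  · rw [csw1 (N := N) hs1 hs''0, csw0 hs0 hs''1]
    constructor
    · intro H
      rcases lt_trichotomy (content s (a, b, 1)) (content s (a', b', 0)) with h' | h' | h'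
      · exact Or.inl h'
      · exact Or.inr h'
      · exfalso
        have hle : (e : ℤ) ≤ content s (a, b, 1) - content s (a', b', 0) :=
          Int.le_of_dvd (by omega) hd
        omega
    · rintro (H | H) <;> omega
  · rw [csw1 (N := N) hs1 hs''0, csw1 (N := N) hs1 hs''0]
    omega

end Main3

section Main3b
variable {e N : ℕ} {s s'' : Fin 2 → ℤ}

lemma nle_g (he : 1 < e) (heven : 2 ∣ e)
    (hs0 : s 0 = 0) (hs1 : s 1 = ((e / 2 + N * e : ℕ) : ℤ))
    (hs''0 : s'' 0 = ((N * e : ℕ) : ℤ)) (hs''1 : s'' 1 = ((e / 2 : ℕ) : ℤ))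
    {γ δ : MPNode 2} (hres : res e s γ = res e s δ) :
    nle s'' (gnode γ) (gnode δ) ↔ nle s γ δ := by
  unfold nle
  rw [nlt_g he heven hs0 hs1 hs''0 hs''1 hres, gnode_inj.eq_iff]

end Main3b
/-- Bundle of hypotheses of the theorem on the multicharges. -/
structure Hyp (e N : ℕ) (s s'' : Fin 2 → ℤ) : Prop where
  he : 1 < e
  heven : 2 ∣ e
  hs0 : s 0 = 0
  hs1 : s 1 = ((e / 2 + N * e : ℕ) : ℤ)
  hs''0 : s'' 0 = ((N * e : ℕ) : ℤ)
  hs''1 : s'' 1 = ((e / 2 : ℕ) : ℤ)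

section Main4

variable {e N : ℕ} {s s'' : Fin 2 → ℤ}

lemma res_gH (H : Hyp e N s s'') (γ : MPNode 2) :
    res e s'' (gnode γ) = res e s γ + ((e / 2 : ℕ) : ZMod e) :=
  res_g H.heven H.hs0 H.hs1 H.hs''0 H.hs''1 γ

lemma res_g' (H : Hyp e N s s'') (η : MPNode 2) :
    res e s'' η = res e s (gnode η) + ((e / 2 : ℕ) : ZMod e) := by
  conv_lhs => rw [← gnode_gnode η]
  exact res_gH H (gnode η)

lemma nle_gH (H : Hyp e N s s'') {γ δ : MPNode 2} (hres : res e s γ = res e s δ) :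
    nle s'' (gnode γ) (gnode δ) ↔ nle s γ δ :=
  nle_g H.he H.heven H.hs0 H.hs1 H.hs''0 H.hs''1 hres

lemma add_g {lam : Multipartition 2} {γ : MPNode 2} :
    IsAddable (mswap lam) (gnode γ) ↔ IsAddable lam γ := by
  obtain ⟨a, b, c⟩ := γ
  simp [IsAddable, gnode, mswap]

lemma rem_g {lam : Multipartition 2} {γ : MPNode 2} :
    IsRemovable (mswap lam) (gnode γ) ↔ IsRemovable lam γ := by
  obtain ⟨a, b, c⟩ := γ
  simp [IsRemovable, gnode, mswap]

lemma ar_g (H : Hyp e N s s'') {lam : Multipartition 2} {i : ZMod e} {δ : MPNode 2} :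
    IsARNode e s'' (mswap lam) (i + ((e / 2 : ℕ) : ZMod e)) (gnode δ) ↔
      IsARNode e s lam i δ := by
  unfold IsARNode
  rw [add_g, rem_g, res_gH H, add_left_inj]

lemma set_g (H : Hyp e N s s'') {lam : Multipartition 2} {i : ZMod e} {δ γ : MPNode 2}
    (hδ : res e s δ = i) (hγ : res e s γ = i)
    (P : Multipartition 2 → MPNode 2 → Prop)
    (hP : ∀ (mu : Multipartition 2) (η : MPNode 2), P (mswap mu) (gnode η) ↔ P mu η) :
    {η | P (mswap lam) η ∧ res e s'' η = i + ((e / 2 : ℕ) : ZMod e) ∧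
        nle s'' (gnode δ) η ∧ nle s'' η (gnode γ)}
      = gnode '' {η | P lam η ∧ res e s η = i ∧ nle s δ η ∧ nle s η γ} := by
  ext η
  simp only [Set.mem_setOf_eq, Set.mem_image]
  constructor
  · rintro ⟨h1, h2, h3, h4⟩
    have hresη : res e s (gnode η) = i := by
      have := res_g' H η
      rw [this] at h2
      exact add_right_cancel h2
    refine ⟨gnode η, ⟨?_, hresη, ?_, ?_⟩, gnode_gnode η⟩
    · rw [← hP lam (gnode η), gnode_gnode]; exact h1
    · have := nle_gH H (γ := δ) (δ := gnode η) (by rw [hδ, hresη])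
      rw [gnode_gnode] at this
      exact this.mp h3
    · have := nle_gH H (γ := gnode η) (δ := γ) (by rw [hγ, hresη])
      rw [gnode_gnode] at this
      exact this.mp h4
  · rintro ⟨η', ⟨p1, p2, p3, p4⟩, rfl⟩
    refine ⟨(hP lam η').mpr p1, ?_, ?_, ?_⟩
    · rw [res_gH H, p2]
    · exact (nle_gH H (hδ.trans p2.symm)).mpr p3
    · exact (nle_gH H (p2.trans hγ.symm)).mpr p4

end Main4
section Main5

variable {e N : ℕ} {s s'' : Fin 2 → ℤ}

lemma setA_g (H : Hyp e N s s'') {lam : Multipartition 2} {i : ZMod e} {δ γ : MPNode 2}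
    (hδ : res e s δ = i) (hγ : res e s γ = i) :
    {η | IsAddable (mswap lam) η ∧ res e s'' η = i + ((e / 2 : ℕ) : ZMod e) ∧
        nle s'' (gnode δ) η ∧ nle s'' η (gnode γ)}
      = gnode '' {η | IsAddable lam η ∧ res e s η = i ∧ nle s δ η ∧ nle s η γ} :=
  set_g H hδ hγ (fun mu η => IsAddable mu η) (fun _ _ => add_g)

lemma setR_g (H : Hyp e N s s'') {lam : Multipartition 2} {i : ZMod e} {δ γ : MPNode 2}
    (hδ : res e s δ = i) (hγ : res e s γ = i) :
    {η | IsRemovable (mswap lam) η ∧ res e s'' η = i + ((e / 2 : ℕ) : ZMod e) ∧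
        nle s'' (gnode δ) η ∧ nle s'' η (gnode γ)}
      = gnode '' {η | IsRemovable lam η ∧ res e s η = i ∧ nle s δ η ∧ nle s η γ} :=
  set_g H hδ hγ (fun mu η => IsRemovable mu η) (fun _ _ => rem_g)

lemma survA_g (H : Hyp e N s s'') {lam : Multipartition 2} {i : ZMod e} {γ : MPNode 2} :
    SurvivingA e s'' (mswap lam) (i + ((e / 2 : ℕ) : ZMod e)) (gnode γ) ↔
      SurvivingA e s lam i γ := by
  constructor
  · rintro ⟨ha, hr, hm⟩
    have hresγ : res e s γ = i := by
      rw [res_gH H] at hr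
      exact add_right_cancel hr
    refine ⟨add_g.mp ha, hresγ, ?_⟩
    intro δ hAR hle
    have hresδ : res e s δ = i := hAR.2
    have hAR'' := (ar_g H).mpr hAR
    have hle'' := (nle_gH H (hresδ.trans hresγ.symm)).mpr hle
    have key := hm (gnode δ) hAR'' hle''
    rwa [setR_g H hresδ hresγ, setA_g H hresδ hresγ,
      Set.ncard_image_of_injective _ gnode_inj,
      Set.ncard_image_of_injective _ gnode_inj] at key
  · rintro ⟨ha, hresγ, hm⟩
    refine ⟨add_g.mpr ha, by rw [res_gH H, hresγ], ?_⟩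
    intro δ'' hAR'' hle''
    have hd2 : gnode (gnode δ'') = δ'' := gnode_gnode δ''
    have hAR : IsARNode e s lam i (gnode δ'') := (ar_g H).mp (by rw [hd2]; exact hAR'')
    have hresδ : res e s (gnode δ'') = i := hAR.2
    have hle : nle s (gnode δ'') γ := by
      have h' := nle_gH H (hresδ.trans hresγ.symm)
      rw [hd2] at h'
      exact h'.mp hle''
    have key := hm (gnode δ'') hAR hle
    rw [← hd2, setR_g H hresδ hresγ, setA_g H hresδ hresγ,
      Set.ncard_image_of_injective _ gnode_inj,
      Set.ncard_image_of_injective _ gnode_inj]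
    exact key

lemma good_g (H : Hyp e N s s'') {lam : Multipartition 2} {i : ZMod e} {γ : MPNode 2} :
    GoodAddable e s'' (mswap lam) (i + ((e / 2 : ℕ) : ZMod e)) (gnode γ) ↔
      GoodAddable e s lam i γ := by
  constructor
  · rintro ⟨hs', hmax⟩
    have hsγ := (survA_g H).mp hs'
    refine ⟨hsγ, ?_⟩
    intro δ hδ
    have h' := hmax (gnode δ) ((survA_g H).mpr hδ)
    exact (nle_gH H (hδ.2.1.trans hsγ.2.1.symm)).mp h'
  · rintro ⟨hsγ, hmax⟩
    refine ⟨(survA_g H).mpr hsγ, ?_⟩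
    intro δ'' hδ''
    have hd2 : gnode (gnode δ'') = δ'' := gnode_gnode δ''
    have hδ : SurvivingA e s lam i (gnode δ'') := (survA_g H).mp (by rw [hd2]; exact hδ'')
    have h' := hmax (gnode δ'') hδ
    have h2 := (nle_gH H (hδ.2.1.trans hsγ.2.1.symm)).mpr h'
    rwa [hd2] at h2

lemma addat_g {lam nu : Multipartition 2} {γ : MPNode 2} :
    AddAt (mswap lam) (gnode γ) (mswap nu) ↔ AddAt lam γ nu := by
  constructor <;> intro h c a
  · have h' := h (oswap c) a
    simp only [mswap_part, oswap_oswap, gnode] at h'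
    simpa only [oswap_inj.eq_iff] using h'
  · have h' := h (oswap c) a
    simp only [mswap_part, gnode]
    have hcond : (c = oswap γ.2.2) ↔ (oswap c = γ.2.2) := by
      constructor
      · rintro rfl; exact oswap_oswap _
      · intro hh; rw [← hh, oswap_oswap]
    simp only [hcond]
    exact h'

lemma frel_g (H : Hyp e N s s'') {lam nu : Multipartition 2} {j : ZMod e} :
    FRel e s'' (j + ((e / 2 : ℕ) : ZMod e)) (mswap lam) (mswap nu) ↔ FRel e s j lam nu := by
  constructor
  · rintro ⟨γ'', hg, haa⟩
    rw [← gnode_gnode γ''] at hg haa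
    exact ⟨gnode γ'', (good_g H).mp hg, addat_g.mp haa⟩
  · rintro ⟨γ, hg, haa⟩
    exact ⟨gnode γ, (good_g H).mpr hg, addat_g.mpr haa⟩

lemma fseq_g (H : Hyp e N s s'') :
    ∀ (is : List (ZMod e)) (lam : Multipartition 2),
      FSeq e s (is.map (fun i => i + ((e / 2 : ℕ) : ZMod e)))
          (Multipartition.empty 2) lam ↔
        FSeq e s'' is (Multipartition.empty 2) (mswap lam) := by
  intro is
  induction is with
  | nil =>
    intro lam
    simp only [List.map_nil]
    show lam = Multipartition.empty 2 ↔ mswap lam = Multipartition.empty 2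
    constructor
    · rintro rfl; exact mswap_empty
    · intro h; rw [← mswap_mswap lam, h, mswap_empty]
  | cons i is ih =>
    intro lam
    simp only [List.map_cons]
    show (∃ nu, FSeq e s (is.map _) _ nu ∧ FRel e s _ nu lam) ↔
      (∃ nu, FSeq e s'' is _ nu ∧ FRel e s'' i nu (mswap lam))
    have hi : i + ((e / 2 : ℕ) : ZMod e) + ((e / 2 : ℕ) : ZMod e) = i := by
      rw [add_assoc, half_add_half H.heven, add_zero]
    constructor
    · rintro ⟨nu, h1, h2⟩
      refine ⟨mswap nu, (ih nu).mp h1, ?_⟩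
      have h3 := (frel_g H (j := i + ((e / 2 : ℕ) : ZMod e))).mpr h2
      rwa [hi] at h3
    · rintro ⟨nu'', h1, h2⟩
      refine ⟨mswap nu'', (ih (mswap nu'')).mpr (by rwa [mswap_mswap]), ?_⟩
      refine (frel_g H (j := i + ((e / 2 : ℕ) : ZMod e))).mp ?_
      rwa [hi, mswap_mswap]

end Main5
/-- Divided bipartitions (Proposition 4.5 of the paper): let `e` be even,
`s = (0, e/2 + Ne)` and `s'' = (Ne, e/2)`.  If `(i₁, …, iₙ)` produces
`(λ¹, λ²)` from the empty bipartition for `s`, then the shifted sequence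
`(i₁+e/2, …, iₙ+e/2)` again produces `(λ¹, λ²)` for `s` if and only if the
original sequence produces the swap `(λ², λ¹)` for `s''`; i.e. `(λ¹, λ²)` is a
divided bipartition for `s` iff `Ψ^e_{s→s''}(λ¹, λ²) = (λ², λ¹)`. -/
theorem stmt14 (e N n : ℕ) (he : 1 < e) (heven : 2 ∣ e)
    (s s'' : Fin 2 → ℤ)
    (hs0 : s 0 = 0) (hs1 : s 1 = ((e / 2 + N * e : ℕ) : ℤ))
    (hs''0 : s'' 0 = ((N * e : ℕ) : ℤ)) (hs''1 : s'' 1 = ((e / 2 : ℕ) : ℤ))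
    (lam : Multipartition 2)
    (is : List (ZMod e)) (hlen : is.length = n)
    (hseq : FSeq e s is (Multipartition.empty 2) lam)
    (mu : Multipartition 2)
    (hmu : ∀ a : ℕ, mu.part 0 a = lam.part 1 a ∧ mu.part 1 a = lam.part 0 a) :
    (FSeq e s (is.map (fun i => i + ((e / 2 : ℕ) : ZMod e)))
        (Multipartition.empty 2) lam) ↔
      FSeq e s'' is (Multipartition.empty 2) mu := by
  have H : Hyp e N s s'' := ⟨he, heven, hs0, hs1, hs''0, hs''1⟩
  have hmu' : mu = mswap lam := by
    apply mpart_ext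
    funext c a
    rcases fin2cases c with rfl | rfl
    · simpa [mswap, oswap_zero] using (hmu a).1
    · simpa [mswap, oswap_one] using (hmu a).2
  rw [hmu']
  exact fseq_g H is lam
end

section
/- Let e>1 be even. A bipartition of the form (λ,λ) satisfies the FLOTW conditions for the parameter e and the multicharge (0,e/2) if and only if the partition λ is e/2-regular, i.e. no nonzero part of λ is repeated e/2 or more times. -/
/-- For `e` even, a bipartition of the form `(λ, λ)` satisfies the FLOTW
conditions for `e` and the multicharge `(0, e/2)` if and only if `λ` is
`e/2`-regular. -/
theorem stmt15 (e : ℕ) (he : 1 < e) (heven : 2 ∣ e)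
    (s : Fin 2 → ℤ) (hs0 : s 0 = 0) (hs1 : s 1 = ((e / 2 : ℕ) : ℤ))
    (lam : Multipartition 2) (hsame : ∀ a : ℕ, lam.part 0 a = lam.part 1 a) :
    FLOTW e s lam ↔ RegularPartition (e / 2) (lam.part 0) := by
  obtain ⟨d, rfl⟩ := heven
  have hd1 : 1 ≤ d := by omega
  have hdiv : 2 * d / 2 = d := by omega
  rw [hdiv] at hs1 ⊢
  haveI : NeZero (2 * d) := ⟨by omega⟩
  set p := lam.part 0 with hp
  have hanti : Antitone p := lam.antitone' 0
  have hpart : ∀ (c : Fin 2) (a : ℕ), lam.part c a = p a := by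
    intro c a
    fin_cases c
    · rfl
    · exact (hsame a).symm
  constructor
  · rintro ⟨-, -, h3⟩
    intro a ha
    by_contra hcon
    push_neg at hcon
    have hm : ∀ a', a ≤ a' → a' ≤ a + (d - 1) → p a' = p a := by
      intro a' h1 h2
      have h3' := hanti h2
      have h4' := hanti h1
      omega
    apply h3 (p a) ha
    ext r
    simp only [Set.mem_setOf_eq, Set.mem_univ, iff_true]
    set x : ZMod (2*d) := r - (((p a : ℤ) - a - d : ℤ) : ZMod (2*d)) with hx
    set t := x.val with ht
    have htlt : t < 2 * d := ZMod.val_lt x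
    have hxt : ((t : ℕ) : ZMod (2*d)) = x := by
      simp [ht, ZMod.natCast_val, ZMod.cast_id]
    have hr : r = (((p a : ℤ) - a - d : ℤ) : ZMod (2*d)) + ((t : ℕ) : ZMod (2*d)) := by
      rw [hxt, hx]; ring
    by_cases hc : t < d
    · refine ⟨0, a + d - 1 - t, ?_, ?_⟩
      · rw [hpart]; exact hm _ (by omega) (by omega)
      · rw [hs0, hr]
        have haz : ((a + d - 1 - t : ℕ) : ℤ) = (a:ℤ) + d - 1 - t := by omega
        rw [haz]
        push_cast
        ring
    · refine ⟨1, a + 2*d - 1 - t, ?_, ?_⟩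
      · rw [hpart]; exact hm _ (by omega) (by omega)
      · rw [hs1, hr]
        have haz : ((a + 2*d - 1 - t : ℕ) : ℤ) = (a:ℤ) + 2*d - 1 - t := by omega
        rw [haz]
        push_cast
        ring
  · intro hreg
    refine ⟨?_, ?_, ?_⟩
    · intro j hj a
      rw [hpart, hpart]
      exact hanti (Nat.le_add_right _ _)
    · intro hl a
      rw [hpart, hpart]
      exact hanti (Nat.le_add_right _ _)
    · intro m hm hu
      by_cases hex : ∃ a, p a = m
      · have hpa0 : p (Nat.find hex) = m := Nat.find_spec hex
        set a0 := Nat.find hex with ha0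
        have hbound : ∀ a, p a = m → a0 ≤ a ∧ a < a0 + (d-1) := by
          intro a ha
          have h1 : a0 ≤ a := Nat.find_min' hex ha
          have h2 : p (a0 + (d-1)) < p a0 := hreg a0 (by omega)
          refine ⟨h1, ?_⟩
          by_contra hcc
          push_neg at hcc
          have := hanti hcc
          omega
        have hmem : (((m : ℤ) - a0 : ℤ) : ZMod (2*d)) ∈
            {r : ZMod (2*d) | ∃ (j : Fin 2) (a : ℕ), lam.part j a = m ∧
              r = (((m : ℤ) - ((a : ℤ) + 1) + s j : ℤ) : ZMod (2*d))} := by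
          rw [hu]; exact Set.mem_univ _
        obtain ⟨j, a, hpa, hres⟩ := hmem
        rw [hpart] at hpa
        obtain ⟨hb1, hb2⟩ := hbound a hpa
        have hmod := (ZMod.intCast_eq_intCast_iff _ _ _).mp hres
        obtain ⟨k, hk⟩ := hmod.dvd
        have hj01 : j = 0 ∨ j = 1 := by
          have := j.isLt
          rcases (by omega : j.val = 0 ∨ j.val = 1) with h | h
          · exact Or.inl (Fin.ext h)
          · exact Or.inr (Fin.ext h)
        rcases hj01 with rfl | rfl
        · rw [hs0] at hk
          have h1 : ((2*d : ℕ) : ℤ) ∣ ((a:ℤ) + 1 - a0) :=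
            ⟨-k, by push_cast at hk ⊢; linear_combination -hk⟩
          have h2 := Int.le_of_dvd (by omega) h1
          push_cast at h2
          omega
        · rw [hs1] at hk
          have h1 : ((2*d : ℕ) : ℤ) ∣ ((a0:ℤ) + d - a - 1) :=
            ⟨k, by push_cast at hk ⊢; linear_combination hk⟩
          have h2 := Int.le_of_dvd (by omega) h1
          push_cast at h2
          omega
      · push_neg at hex
        have hmem : (0 : ZMod (2*d)) ∈
            {r : ZMod (2*d) | ∃ (j : Fin 2) (a : ℕ), lam.part j a = m ∧
              r = (((m : ℤ) - ((a : ℤ) + 1) + s j : ℤ) : ZMod (2*d))} := by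
          rw [hu]; exact Set.mem_univ _
        obtain ⟨j, a, hpa, -⟩ := hmem
        rw [hpart] at hpa
        exact absurd hpa (hex a)
end
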